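/- arXiv:1310.1570 — 9 statements merged into one kernel-verified Lean document; each statement's English description precedes it below -/
import Mathlib

section
/- Let n, d ≥ 1, let v_0, v_1, …, v_n ∈ ℝ^d, and consider the (possibly degenerate) parallelepiped whose vertices are the points P(ε) = v_0 + Σ_{i=1}^n ε_i v_i for ε ∈ {0,1}^n. Then the number of ε ∈ {0,1}^n such that ‖P(ε)‖ < ‖P(ε')‖ (Euclidean norm) for every ε' ∈ {0,1}^n differing from ε in exactly one coordinate is at most binomial(n, ⌊n/2⌋). -/
/-!
Kleitman's argument. Call a family `K` of index sets spread if
`∑ i ∈ A ∆ B, ‖v i‖ ^ 2 ≤ ‖∑ i ∈ A, v i - ∑ i ∈ B, v i‖ ^ 2` for all `A, B ∈ K`. If the vertices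
indexed by `A ≠ B` are both strictly closer to the origin than their neighbours, then adding up
the two neighbour inequalities in each direction `i ∈ A ∆ B` gives the reverse strict
inequality, so a spread family contains at most one such vertex. The subsets of an `n`-set are
covered by `C(n, ⌊n/2⌋)` spread families: from a cover for `s`, each family `K` with a member
`x` maximising `⟪∑ i ∈ x, v i, v a⟫` gives the families `K ∪ {x ∪ {a}}` and
`{B ∪ {a} | B ∈ K \ {x}}` for `insert a s`, so the family sizes evolve like the chain lengths of
a symmetric chain decomposition.
-/

open Finset
open scoped symmDiff InnerProductSpace

/-- The number of chains with more than `k` elements in a symmetric chain decomposition of the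
subsets of an `n`-set, `C(n, ⌊(n - k)/2⌋)`, written via `Nat.choose_symm` so that it vanishes for
`k > n`. -/
def symmChainCount (n k : ℕ) : ℕ := n.choose ((n + k + 1) / 2)

lemma symmChainCount_zero (n : ℕ) : symmChainCount n 0 = n.choose (n / 2) :=
  Nat.choose_symm_of_eq_add (by omega)

lemma symmChainCount_succ_zero (n : ℕ) :
    symmChainCount (n + 1) 0 = symmChainCount n 0 + symmChainCount n 1 := by
  rw [symmChainCount_zero n]
  simp only [symmChainCount, add_zero]
  rw [show (n + 1 + 1) / 2 = n / 2 + 1 by omega, Nat.choose_succ_succ]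

lemma symmChainCount_succ_succ (n k : ℕ) :
    symmChainCount (n + 1) (k + 1) = symmChainCount n k + symmChainCount n (k + 2) := by
  rw [symmChainCount, symmChainCount, symmChainCount,
    show (n + 1 + (k + 1) + 1) / 2 = (n + k + 1) / 2 + 1 by omega,
    show (n + (k + 2) + 1) / 2 = (n + k + 1) / 2 + 1 by omega, Nat.choose_succ_succ]

variable {ι E : Type*} [NormedAddCommGroup E]

section

variable [DecidableEq ι]

def IsFar (v : ι → E) (A B : Finset ι) : Prop :=
  ∑ i ∈ A ∆ B, ‖v i‖ ^ 2 ≤ ‖∑ i ∈ A, v i - ∑ i ∈ B, v i‖ ^ 2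

namespace IsFar

variable {v : ι → E} {A B : Finset ι} {a : ι}

lemma refl (v : ι → E) (A : Finset ι) : IsFar v A A := by simp [IsFar]

lemma symm (h : IsFar v A B) : IsFar v B A := by
  rwa [IsFar, symmDiff_comm, norm_sub_rev]

lemma insert_left [InnerProductSpace ℝ E] (h : IsFar v A B) (hA : a ∉ A) (hB : a ∉ B)
    (hinner : 0 ≤ ⟪∑ i ∈ A, v i - ∑ i ∈ B, v i, v a⟫_ℝ) : IsFar v (insert a A) B := by
  have hAB : a ∉ A ∆ B := by simp [mem_symmDiff, hA, hB]
  have hsymm : insert a A ∆ B = insert a (A ∆ B) := by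
    ext i; by_cases hi : i = a <;> simp [mem_symmDiff, hi, hB]
  unfold IsFar at h ⊢
  rw [hsymm, sum_insert hAB, sum_insert hA, add_comm (v a), add_sub_right_comm, norm_add_sq_real]
  linarith

lemma insert_insert (h : IsFar v A B) (hA : a ∉ A) (hB : a ∉ B) :
    IsFar v (insert a A) (insert a B) := by
  have hsymm : insert a A ∆ insert a B = A ∆ B := by
    ext i; by_cases hi : i = a <;> simp [mem_symmDiff, hi, hA, hB]
  unfold IsFar at h ⊢
  rwa [hsymm, sum_insert hA, sum_insert hB, add_sub_add_left_eq_sub]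

end IsFar

def IsSpread (v : ι → E) (K : Finset (Finset ι)) : Prop := ∀ A ∈ K, ∀ B ∈ K, IsFar v A B

namespace IsSpread

variable {v : ι → E} {K L : Finset (Finset ι)} {A : Finset ι} {a : ι}

lemma mono (h : IsSpread v K) (hLK : L ⊆ K) : IsSpread v L :=
  fun A hA B hB => h A (hLK hA) B (hLK hB)

lemma image_insert (h : IsSpread v K) (ha : ∀ A ∈ K, a ∉ A) : IsSpread v (K.image (insert a)) := by
  simp only [IsSpread, mem_image, forall_exists_index, and_imp]
  rintro _ A hA rfl _ B hB rfl
  exact (h A hA B hB).insert_insert (ha A hA) (ha B hB)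

lemma insert (h : IsSpread v K) (hA : ∀ B ∈ K, IsFar v A B) : IsSpread v (insert A K) := by
  simp only [IsSpread, mem_insert, forall_eq_or_imp]
  exact ⟨⟨.refl v A, hA⟩, fun B hB => ⟨(hA B hB).symm, h B hB⟩⟩

end IsSpread

structure IsKleitmanCover (v : ι → E) (s : Finset ι) (P : Finset (Finset (Finset ι))) : Prop where
  subset_powerset : ∀ K ∈ P, K ⊆ s.powerset
  exists_mem : ∀ A ⊆ s, ∃ K ∈ P, A ∈ K
  nonempty : ∀ K ∈ P, K.Nonempty
  isSpread : ∀ K ∈ P, IsSpread v K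
  card_filter_lt_le : ∀ k, #{K ∈ P | k < #K} ≤ symmChainCount #s k

lemma isKleitmanCover_empty (v : ι → E) : IsKleitmanCover v ∅ {{∅}} where
  subset_powerset := by simp
  exists_mem := by simp
  nonempty := by simp
  isSpread := by simp [IsSpread, IsFar.refl]
  card_filter_lt_le k := by rcases k with _ | k <;> simp [filter_singleton, symmChainCount]

def kleitmanStep (a : ι) (top : Finset (Finset ι) → Finset ι) (P : Finset (Finset (Finset ι))) :
    Finset (Finset (Finset ι)) :=
  P.image (fun K => insert (insert a (top K)) K) ∪
    {K ∈ P | 1 < #K}.image (fun K => (K.erase (top K)).image (insert a))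

section kleitmanStep

variable {v : ι → E} {s : Finset ι} {P : Finset (Finset (Finset ι))} {a : ι}
  {top : Finset (Finset ι) → Finset ι}

lemma card_filter_kleitmanStep_le (htop : ∀ K ∈ P, top K ∈ K) (k : ℕ) :
    #{K ∈ kleitmanStep a top P | k < #K} ≤ #{K ∈ P | k ≤ #K} + #{K ∈ P | k + 1 < #K} := by
  rw [kleitmanStep, filter_union, filter_image, filter_image]
  refine (card_union_le _ _).trans (add_le_add ((card_image_le).trans (card_le_card ?_))
    ((card_image_le).trans (card_le_card ?_)))
  · intro K
    simp only [mem_filter]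
    exact fun ⟨hK, hk⟩ => ⟨hK, Nat.le_of_lt_succ (hk.trans_le (card_insert_le _ _))⟩
  · intro K
    simp only [mem_filter]
    rintro ⟨⟨hK, -⟩, hk⟩
    have := (card_image_le (f := insert a)).trans_eq (card_erase_of_mem (htop K hK))
    exact ⟨hK, by omega⟩

lemma mem_kleitmanStep {K' : Finset (Finset ι)} :
    K' ∈ kleitmanStep a top P ↔ (∃ K ∈ P, insert (insert a (top K)) K = K') ∨
      ∃ K ∈ P, 1 < #K ∧ (K.erase (top K)).image (insert a) = K' := by
  simp only [kleitmanStep, mem_union, mem_image, mem_filter, and_assoc]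

lemma subset_powerset_of_mem_kleitmanStep (hP : ∀ K ∈ P, K ⊆ s.powerset)
    (htop : ∀ K ∈ P, top K ∈ K) {K' : Finset (Finset ι)} (hK' : K' ∈ kleitmanStep a top P) :
    K' ⊆ (insert a s).powerset := by
  have hsub : ∀ K ∈ P, ∀ A ∈ K, A ⊆ s := fun K hK A hA => mem_powerset.1 (hP K hK hA)
  intro A hA
  rw [mem_powerset]
  rcases mem_kleitmanStep.1 hK' with ⟨K, hK, rfl⟩ | ⟨K, hK, -, rfl⟩
  · rcases mem_insert.1 hA with rfl | hA
    · exact insert_subset_insert a (hsub K hK _ (htop K hK))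
    · exact (hsub K hK A hA).trans (subset_insert a s)
  · obtain ⟨B, hB, rfl⟩ := mem_image.1 hA
    exact insert_subset_insert a (hsub K hK B (mem_of_mem_erase hB))

lemma exists_mem_kleitmanStep (hP : ∀ A ⊆ s, ∃ K ∈ P, A ∈ K) (htop : ∀ K ∈ P, top K ∈ K)
    {A : Finset ι} (hA : A ⊆ insert a s) : ∃ K' ∈ kleitmanStep a top P, A ∈ K' := by
  simp only [mem_kleitmanStep]
  rw [subset_insert_iff] at hA
  obtain ⟨K, hK, hAK⟩ := hP _ hA
  by_cases ha : a ∈ A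
  · by_cases htopA : A.erase a = top K
    · refine ⟨_, .inl ⟨K, hK, rfl⟩, ?_⟩
      rw [← htopA, insert_erase ha]
      exact mem_insert_self _ _
    · refine ⟨_, .inr ⟨K, hK, one_lt_card.2 ⟨_, hAK, _, htop K hK, htopA⟩, rfl⟩, ?_⟩
      exact mem_image.2 ⟨_, mem_erase.2 ⟨htopA, hAK⟩, insert_erase ha⟩
  · rw [erase_eq_of_notMem ha] at hAK
    exact ⟨_, .inl ⟨K, hK, rfl⟩, mem_insert_of_mem hAK⟩

lemma nonempty_of_mem_kleitmanStep (htop : ∀ K ∈ P, top K ∈ K) {K' : Finset (Finset ι)}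
    (hK' : K' ∈ kleitmanStep a top P) : K'.Nonempty := by
  rcases mem_kleitmanStep.1 hK' with ⟨K, hK, rfl⟩ | ⟨K, hK, hcard, rfl⟩
  · exact insert_nonempty _ _
  · rw [image_nonempty, ← card_pos, card_erase_of_mem (htop K hK)]
    omega

lemma isSpread_of_mem_kleitmanStep [InnerProductSpace ℝ E] (hP : ∀ K ∈ P, IsSpread v K)
    (hfree : ∀ K ∈ P, ∀ A ∈ K, a ∉ A) (htop : ∀ K ∈ P, top K ∈ K)
    (hmax : ∀ K ∈ P, ∀ B ∈ K, ⟪∑ i ∈ B, v i, v a⟫_ℝ ≤ ⟪∑ i ∈ top K, v i, v a⟫_ℝ)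
    {K' : Finset (Finset ι)} (hK' : K' ∈ kleitmanStep a top P) : IsSpread v K' := by
  rcases mem_kleitmanStep.1 hK' with ⟨K, hK, rfl⟩ | ⟨K, hK, -, rfl⟩
  · refine (hP K hK).insert fun B hB => ?_
    refine (hP K hK _ (htop K hK) B hB).insert_left (hfree K hK _ (htop K hK)) (hfree K hK B hB) ?_
    rw [inner_sub_left, sub_nonneg]
    exact hmax K hK B hB
  · exact ((hP K hK).mono (erase_subset _ _)).image_insert
      fun A hA => hfree K hK A (mem_of_mem_erase hA)

end kleitmanStep

lemma IsKleitmanCover.insert [InnerProductSpace ℝ E] {v : ι → E} {s : Finset ι}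
    {P : Finset (Finset (Finset ι))} (hP : IsKleitmanCover v s P) {a : ι} (has : a ∉ s) :
    ∃ Q, IsKleitmanCover v (insert a s) Q := by
  have hfree : ∀ K ∈ P, ∀ A ∈ K, a ∉ A := fun K hK A hA haA =>
    has (mem_powerset.1 (hP.subset_powerset K hK hA) haA)
  choose! top htop hmax using fun K (hK : K ∈ P) =>
    K.exists_max_image (fun A => ⟪∑ i ∈ A, v i, v a⟫_ℝ) (hP.nonempty K hK)
  refine ⟨kleitmanStep a top P, fun K' hK' => subset_powerset_of_mem_kleitmanStep
    hP.subset_powerset htop hK', fun A hA => exists_mem_kleitmanStep hP.exists_mem htop hA,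
    fun K' hK' => nonempty_of_mem_kleitmanStep htop hK',
    fun K' hK' => isSpread_of_mem_kleitmanStep hP.isSpread hfree htop hmax hK', fun k => ?_⟩
  refine (card_filter_kleitmanStep_le htop k).trans ?_
  rw [card_insert_of_notMem has]
  rcases k with _ | k
  · have hall : {K ∈ P | 0 ≤ #K} = {K ∈ P | 0 < #K} :=
      filter_congr fun K hK => by simp [card_pos.2 (hP.nonempty K hK)]
    rw [symmChainCount_succ_zero, hall]
    exact add_le_add (hP.card_filter_lt_le 0) (hP.card_filter_lt_le 1)
  · rw [symmChainCount_succ_succ]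
    exact add_le_add (hP.card_filter_lt_le k) (hP.card_filter_lt_le (k + 2))

lemma exists_isKleitmanCover [InnerProductSpace ℝ E] (v : ι → E) (s : Finset ι) :
    ∃ P, IsKleitmanCover v s P := by
  induction s using Finset.induction_on with
  | empty => exact ⟨_, isKleitmanCover_empty v⟩
  | insert a s has ih => exact ih.elim fun P hP => hP.insert has

lemma IsKleitmanCover.card_le {v : ι → E} {s : Finset ι} {P : Finset (Finset (Finset ι))}
    (hP : IsKleitmanCover v s P) : #P ≤ (#s).choose (#s / 2) := by
  rw [← symmChainCount_zero, ← filter_true_of_mem fun K hK => card_pos.2 (hP.nonempty K hK)]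
  exact hP.card_filter_lt_le 0

lemma Finset.symmDiff_singleton_of_notMem {A : Finset ι} {i : ι} (h : i ∉ A) :
    A ∆ {i} = insert i A := by
  ext j; by_cases hj : j = i <;> simp [mem_symmDiff, hj, h]

lemma Finset.symmDiff_singleton_of_mem {A : Finset ι} {i : ι} (h : i ∈ A) :
    A ∆ {i} = A.erase i := by
  ext j; by_cases hj : j = i <;> simp [mem_symmDiff, hj, h]

section vertices

variable [InnerProductSpace ℝ E]

lemma inner_sub_lt_norm_sq {q r u : E} (hq : ‖q‖ < ‖q + u‖) (hr : ‖r‖ < ‖r - u‖) :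
    ⟪r - q, u⟫_ℝ < ‖u‖ ^ 2 := by
  have hq2 := pow_lt_pow_left₀ hq (norm_nonneg _) two_ne_zero
  have hr2 := pow_lt_pow_left₀ hr (norm_nonneg _) two_ne_zero
  rw [norm_add_sq_real] at hq2
  rw [norm_sub_sq_real] at hr2
  rw [inner_sub_left]
  linarith

def IsStrictLocalMinVertex (v₀ : E) (v : ι → E) (A : Finset ι) : Prop :=
  ∀ i, ‖v₀ + ∑ j ∈ A, v j‖ < ‖v₀ + ∑ j ∈ A ∆ {i}, v j‖

variable {v₀ : E} {v : ι → E} {A B : Finset ι}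

lemma IsStrictLocalMinVertex.inner_lt (hA : IsStrictLocalMinVertex v₀ v A)
    (hB : IsStrictLocalMinVertex v₀ v B) {i : ι} (hi : i ∈ B \ A) :
    ⟪∑ j ∈ B, v j - ∑ j ∈ A, v j, v i⟫_ℝ < ‖v i‖ ^ 2 := by
  obtain ⟨hiB, hiA⟩ := mem_sdiff.1 hi
  have hAi := hA i
  have hBi := hB i
  rw [symmDiff_singleton_of_notMem hiA, sum_insert hiA, add_comm (v i), ← add_assoc] at hAi
  rw [symmDiff_singleton_of_mem hiB, sum_erase_eq_sub hiB, ← add_sub_assoc] at hBi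
  simpa only [add_sub_add_left_eq_sub] using inner_sub_lt_norm_sq hAi hBi

lemma IsStrictLocalMinVertex.not_isFar (hA : IsStrictLocalMinVertex v₀ v A)
    (hB : IsStrictLocalMinVertex v₀ v B) (hAB : A ≠ B) : ¬ IsFar v A B := by
  wlog hBA : (B \ A).Nonempty generalizing A B
  · have hAB' : (A \ B).Nonempty := by
      rw [nonempty_iff_ne_empty, Ne, sdiff_eq_empty_iff_subset] at hBA ⊢
      exact fun h => hAB (subset_antisymm h (not_not.1 hBA))
    exact fun h => this hB hA hAB.symm hAB' h.symm
  rw [IsFar, not_le]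
  set D := ∑ j ∈ B, v j - ∑ j ∈ A, v j
  calc ‖∑ j ∈ A, v j - ∑ j ∈ B, v j‖ ^ 2 = ⟪D, D⟫_ℝ := by
        rw [real_inner_self_eq_norm_sq, norm_sub_rev]
    _ = ∑ i ∈ B \ A, ⟪D, v i⟫_ℝ + ∑ i ∈ A \ B, ⟪∑ j ∈ A, v j - ∑ j ∈ B, v j, v i⟫_ℝ := by
        rw [← inner_sum, ← inner_sum, ← neg_sub, inner_neg_left, ← sub_eq_add_neg,
          ← inner_sub_right, sum_sdiff_sub_sum_sdiff]
    _ < ∑ i ∈ B \ A, ‖v i‖ ^ 2 + ∑ i ∈ A \ B, ‖v i‖ ^ 2 :=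
        add_lt_add_of_lt_of_le (sum_lt_sum_of_nonempty hBA fun i hi => hA.inner_lt hB hi)
          (sum_le_sum fun i hi => (hB.inner_lt hA hi).le)
    _ = ∑ i ∈ A ∆ B, ‖v i‖ ^ 2 := by
        rw [symmDiff_def, sup_eq_union, sum_union disjoint_sdiff_sdiff, add_comm]

theorem card_isStrictLocalMinVertex_le [Fintype ι] (v₀ : E) (v : ι → E) :
    {A : Finset ι | IsStrictLocalMinVertex v₀ v A}.ncard ≤
      (Fintype.card ι).choose (Fintype.card ι / 2) := by
  obtain ⟨P, hP⟩ := exists_isKleitmanCover v univ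
  choose cls hcls hmem using fun A => hP.exists_mem A (subset_univ A)
  calc _ ≤ (P : Set (Finset (Finset ι))).ncard := by
        refine Set.ncard_le_ncard_of_injOn cls (fun A _ => hcls A) fun A hA B hB hcl => ?_
        by_contra hAB
        exact hA.not_isFar hB hAB (hP.isSpread _ (hcls A) A (hmem A) B (hcl ▸ hmem B))
    _ ≤ _ := (Set.ncard_coe_finset P).trans_le hP.card_le

end vertices

end

lemma Finset.sum_ite_smul_eq_sum_filter {R M : Type*} [Semiring R] [AddCommMonoid M] [Module R M]
    [Fintype ι] (v : ι → M) (ε : ι → Bool) :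
    ∑ j, (if ε j then (1 : R) else 0) • v j = ∑ j ∈ {j | ε j}, v j := by
  simp only [ite_smul, one_smul, zero_smul, sum_filter]

lemma Finset.filter_update_not [DecidableEq ι] [Fintype ι] (ε : ι → Bool) (i : ι) :
    ({j | Function.update ε i (!ε i) j} : Finset ι) = ({j | ε j} : Finset ι) ∆ {i} := by
  ext j; by_cases hj : j = i <;> simp [Finset.mem_symmDiff, hj]

theorem parallelepiped_close_vertices_bound_general (n d : ℕ)
    (v₀ : EuclideanSpace ℝ (Fin d)) (v : Fin n → EuclideanSpace ℝ (Fin d)) :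
    {ε : Fin n → Bool |
      ∀ i : Fin n,
        ‖v₀ + ∑ j, (if ε j then (1 : ℝ) else 0) • v j‖ <
        ‖v₀ + ∑ j, (if Function.update ε i (!ε i) j then (1 : ℝ) else 0) • v j‖}.ncard
      ≤ n.choose (n / 2) := by
  have hsupp_inj : Function.Injective fun ε : Fin n → Bool => ({j | ε j} : Finset (Fin n)) :=
    fun ε ε' h => funext fun j => Bool.eq_iff_iff.2 (by simpa using congrArg (j ∈ ·) h)
  calc _ ≤ {A : Finset (Fin n) | IsStrictLocalMinVertex v₀ v A}.ncard := by
        refine Set.ncard_le_ncard_of_injOn _ (fun ε hε i => ?_) hsupp_inj.injOn (Set.toFinite _)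
        simpa only [sum_ite_smul_eq_sum_filter, filter_update_not] using hε i
    _ ≤ n.choose (n / 2) := by
        simpa only [Fintype.card_fin] using card_isStrictLocalMinVertex_le v₀ v

/-- A (possibly degenerate) parallelepiped in `ℝ^d`, with vertices
`P ε = v₀ + ∑ i, ε i • v i` for `ε ∈ {0,1}^n`, has at most `binomial(n, ⌊n/2⌋)` vertices
that are strictly closer to the origin (in Euclidean norm) than all of their neighbors,
where the neighbors of `P ε` are the `P ε'` with `ε'` differing from `ε` in exactly
one coordinate. -/
theorem parallelepiped_close_vertices_bound (n d : ℕ) (hn : 1 ≤ n) (hd : 1 ≤ d)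
    (v₀ : EuclideanSpace ℝ (Fin d)) (v : Fin n → EuclideanSpace ℝ (Fin d)) :
    {ε : Fin n → Bool |
      ∀ i : Fin n,
        ‖v₀ + ∑ j, (if ε j then (1 : ℝ) else 0) • v j‖ <
        ‖v₀ + ∑ j, (if Function.update ε i (!ε i) j then (1 : ℝ) else 0) • v j‖}.ncard
      ≤ n.choose (n / 2) :=
  parallelepiped_close_vertices_bound_general n d v₀ v
end

section
/- Let n ≥ 1 and define Θ : ℝ^n → ℝ by Θ(x) = −(x_1 + ⋯ + x_n − ⌊n/2⌋)². Then the strict local maxima of Θ on {0,1}^n are exactly the points x ∈ {0,1}^n with x_1 + ⋯ + x_n = ⌊n/2⌋; in particular Θ has exactly binomial(n, ⌊n/2⌋) strict local maxima on {0,1}^n. -/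
/-- The 0/1 real vector corresponding to a point of the discrete cube `{0,1}^n`. -/
def toVec {n : ℕ} (x : Fin n → Bool) : Fin n → ℝ := fun i => if x i then 1 else 0

/-- `x ∈ {0,1}^n` is a strict local maximum of `Θ` on the discrete cube: its value is
strictly larger than at every point differing from `x` in exactly one coordinate. -/
def IsStrictLocalMax {n : ℕ} (Θ : (Fin n → ℝ) → ℝ) (x : Fin n → Bool) : Prop :=
  ∀ i : Fin n, Θ (toVec x) > Θ (toVec (Function.update x i (!x i)))

lemma sum_toVec {n : ℕ} (x : Fin n → Bool) :
    ∑ i, toVec x i = ((Finset.univ.filter (fun i => x i)).card : ℝ) := by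
  simp [toVec, Finset.sum_boole]

lemma sum_flip {n : ℕ} (x : Fin n → Bool) (i : Fin n) :
    ∑ j, toVec (Function.update x i (!x i)) j
      = (∑ j, toVec x j) + (if x i then -1 else 1) := by
  have h : toVec (Function.update x i (!x i))
      = Function.update (toVec x) i (if x i then 0 else 1) := by
    funext j
    by_cases hj : j = i <;> simp [toVec, Function.update, hj] <;> cases x i <;> simp
  rw [h, Finset.sum_update_of_mem (Finset.mem_univ i),
      ← Finset.add_sum_erase Finset.univ (toVec x) (Finset.mem_univ i)]
  simp only [Finset.sdiff_singleton_eq_erase]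
  cases hx : x i <;> simp [toVec, hx] <;> ring

/-- For `Θ(x) = -(x₁ + ⋯ + xₙ - ⌊n/2⌋)²`, the strict local maxima of `Θ` on `{0,1}^n` are
exactly the points with coordinate sum `⌊n/2⌋`; in particular there are exactly
`binomial(n, ⌊n/2⌋)` of them. -/
theorem extremal_example (n : ℕ) (hn : 1 ≤ n) (Θ : (Fin n → ℝ) → ℝ)
    (hΘ : ∀ x : Fin n → ℝ, Θ x = -((∑ i, x i) - ((n / 2 : ℕ) : ℝ)) ^ 2) :
    (∀ x : Fin n → Bool, IsStrictLocalMax Θ x ↔ (∑ i, toVec x i) = ((n / 2 : ℕ) : ℝ)) ∧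
    {x : Fin n → Bool | IsStrictLocalMax Θ x}.ncard = n.choose (n / 2) := by
  set m : ℕ := n / 2 with hm
  have hmn : m ≤ n := Nat.div_le_self n 2
  have key : ∀ x : Fin n → Bool, IsStrictLocalMax Θ x ↔ (∑ i, toVec x i) = (m : ℝ) := by
    intro x
    set c : ℕ := (Finset.univ.filter (fun i => x i)).card with hc
    have hS : ∑ i, toVec x i = (c : ℝ) := sum_toVec x
    constructor
    · intro h
      rw [hS]
      by_contra hne
      have hcm : c ≠ m := fun he => hne (by exact_mod_cast he)
      rcases lt_or_gt_of_ne hcm with hlt | hgt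
      · -- c < m ≤ n, so some coordinate is false
        have hcn : c < n := lt_of_lt_of_le hlt hmn
        have : ∃ i, x i = false := by
          by_contra hall
          push_neg at hall
          have : Finset.univ.filter (fun i => x i) = Finset.univ := by
            apply Finset.filter_true_of_mem
            intro i _
            cases hxi : x i
            · exact absurd hxi (hall i)
            · rfl
          rw [hc, this, Finset.card_univ, Fintype.card_fin] at hcn
          exact lt_irrefl n hcn
        obtain ⟨i, hi⟩ := this
        have hflip := h i
        rw [hΘ, hΘ, hS, sum_flip x i, hS, hi] at hflip
        norm_num at hflip
        have h1 : (c : ℝ) + 1 ≤ (m : ℝ) := by exact_mod_cast hlt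
        nlinarith [hflip]
      · -- c > m ≥ 0, so some coordinate is true
        have : ∃ i, x i = true := by
          have hpos : 0 < c := lt_of_le_of_lt (Nat.zero_le m) hgt
          rw [hc, Finset.card_pos] at hpos
          obtain ⟨i, hi⟩ := hpos
          exact ⟨i, (Finset.mem_filter.mp hi).2⟩
        obtain ⟨i, hi⟩ := this
        have hflip := h i
        rw [hΘ, hΘ, hS, sum_flip x i, hS] at hflip
        simp only [if_pos hi] at hflip
        have h1 : (m : ℝ) + 1 ≤ (c : ℝ) := by exact_mod_cast hgt
        nlinarith [hflip]
    · intro h i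
      rw [hΘ, hΘ, sum_flip x i, h]
      cases hxi : x i <;> simp [hxi] <;> nlinarith
  refine ⟨key, ?_⟩
  have hset : {x : Fin n → Bool | IsStrictLocalMax Θ x}
      = {x | (Finset.univ.filter (fun i => x i)).card = m} := by
    ext x
    simp only [Set.mem_setOf_eq, key x, sum_toVec x]
    exact ⟨fun h => by exact_mod_cast h, fun h => by exact_mod_cast h⟩
  rw [hset]
  have e : {x : Fin n → Bool | (Finset.univ.filter (fun i => x i)).card = m}
      ≃ {s : Finset (Fin n) // s.card = m} :=
    { toFun := fun x => ⟨Finset.univ.filter (fun i => x.1 i), x.2⟩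
      invFun := fun s => ⟨fun i => i ∈ s.1, by simp [s.2]⟩
      left_inv := fun x => Subtype.ext (funext fun i => by simp)
      right_inv := fun s => Subtype.ext (by ext i; simp) }
  rw [Set.ncard_eq_toFinset_card']
  rw [Set.toFinset_card]
  rw [Fintype.card_congr e, Fintype.card_finset_len, Fintype.card_fin]
end

section
/- Let n, d ≥ 1, let v_0, v_1, …, v_n ∈ ℝ^d with ‖v_i‖ ≥ 2 (Euclidean norm) for all 1 ≤ i ≤ n. Then the number of ε ∈ {0,1}^n with ‖v_0 + Σ_{i=1}^n ε_i v_i‖ < 1 is at most binomial(n, ⌊n/2⌋). -/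
/-!
Kleitman's argument. Call a family of subsets of `s` separated if the sums of `f` over any two
of its members are at least `r` apart; two sums in an open ball of radius `r / 2` never come from
the same separated family. By induction on `s`, the subsets of `s` are covered by separated
families whose sizes are dominated by the chain sizes of a symmetric chain decomposition, so that
there are at most `(#s).choose (#s / 2)` of them. In the step from `s` to `insert i s`, a family
`𝒜` yields `𝒜 ∪ {insert i t₀}` and `{insert i t | t ∈ 𝒜, t ≠ t₀}`, where `t₀` maximizes
`g (∑ j ∈ t, f j)` over `t ∈ 𝒜` for a functional `g` of norm at most one with `g (f i) = ‖f i‖`: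
the sum over `insert i t₀` exceeds every sum over `𝒜` by at least `‖f i‖ ≥ r` under `g`.
-/

open Finset

/-- The number of chains with more than `k` elements in a symmetric chain decomposition of the
subsets of an `n`-set: such a decomposition has `n.choose a - n.choose (a - 1)` chains with
`n + 1 - 2 * a` elements for each `a ≤ n / 2`. -/
def longChainCount (n k : ℕ) : ℕ := if k ≤ n then n.choose ((n - k) / 2) else 0

theorem longChainCount_pred_add_succ (n k : ℕ) :
    longChainCount n (k - 1) + longChainCount n (k + 1) = longChainCount (n + 1) k := by
  unfold longChainCount
  rcases k with _ | k
  · obtain ⟨m, rfl | rfl⟩ := Nat.even_or_odd' n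
    · rcases m with _ | m
      · simp
      · rw [if_pos (by omega), if_pos (by omega), if_pos (by omega),
          show (2 * (m + 1) - (0 - 1)) / 2 = m + 1 by omega,
          show (2 * (m + 1) - (0 + 1)) / 2 = m by omega,
          show (2 * (m + 1) + 1 - 0) / 2 = m + 1 by omega, add_comm, Nat.choose_succ_succ]
    · rw [if_pos (by omega), if_pos (by omega), if_pos (by omega),
        show (2 * m + 1 - (0 - 1)) / 2 = m by omega,
        show (2 * m + 1 - (0 + 1)) / 2 = m by omega,
        show (2 * m + 1 + 1 - 0) / 2 = m + 1 by omega, Nat.choose_succ_succ,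
        Nat.choose_symm_half]
  · by_cases hk : k + 1 + 1 ≤ n
    · rw [if_pos (by omega), if_pos hk, if_pos (by omega),
        show (n + 1 - (k + 1)) / 2 = (n - (k + 1 + 1)) / 2 + 1 by omega, Nat.choose_succ_succ,
        show (n - (k + 1 - 1)) / 2 = (n - (k + 1 + 1)) / 2 + 1 by omega, add_comm]
    · rw [if_neg hk, add_zero]
      split_ifs
      · simp [show (n - k) / 2 = 0 by omega]
      all_goals omega

variable {ι E : Type*}

theorem card_image_insert_of_forall_notMem [DecidableEq ι] {𝒜 : Finset (Finset ι)} {i : ι}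
    (h : ∀ t ∈ 𝒜, i ∉ t) : #(𝒜.image (insert i)) = #𝒜 :=
  card_image_of_injOn fun t ht u hu htu => by
    rw [← erase_insert (h t ht), htu, erase_insert (h u hu)]

variable [SeminormedAddCommGroup E]

def SubsetSumsSeparated (f : ι → E) (r : ℝ) (𝒜 : Finset (Finset ι)) : Prop :=
  (𝒜 : Set (Finset ι)).Pairwise fun t u => r ≤ dist (∑ j ∈ t, f j) (∑ j ∈ u, f j)

namespace SubsetSumsSeparated

variable {f : ι → E} {r : ℝ} {𝒜 ℬ : Finset (Finset ι)} {i : ι}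

theorem mono (h : SubsetSumsSeparated f r 𝒜) (hℬ : ℬ ⊆ 𝒜) : SubsetSumsSeparated f r ℬ :=
  Set.Pairwise.mono (coe_subset.2 hℬ) h

theorem eq_of_sum_mem_ball (h : SubsetSumsSeparated f r 𝒜) {t u : Finset ι} (ht : t ∈ 𝒜)
    (hu : u ∈ 𝒜) {x : E} (htx : ∑ j ∈ t, f j ∈ Metric.ball x (r / 2))
    (hux : ∑ j ∈ u, f j ∈ Metric.ball x (r / 2)) : t = u := by
  by_contra htu
  have := h ht hu htu
  have := dist_triangle_right (∑ j ∈ t, f j) (∑ j ∈ u, f j) x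
  rw [Metric.mem_ball] at htx hux
  linarith

theorem image_insert [DecidableEq ι] (h : SubsetSumsSeparated f r 𝒜) (hi : ∀ t ∈ 𝒜, i ∉ t) :
    SubsetSumsSeparated f r (𝒜.image (insert i)) := by
  intro _ ht' _ hu' htu
  obtain ⟨t, ht, rfl⟩ := mem_image.1 ht'
  obtain ⟨u, hu, rfl⟩ := mem_image.1 hu'
  rw [sum_insert (hi t ht), sum_insert (hi u hu), dist_add_left]
  exact h ht hu (ne_of_apply_ne _ htu)

theorem exists_insert_insert [NormedSpace ℝ E] [DecidableEq ι] (h : SubsetSumsSeparated f r 𝒜)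
    (hne : 𝒜.Nonempty) (hi : ∀ t ∈ 𝒜, i ∉ t) (hfi : r ≤ ‖f i‖) :
    ∃ t ∈ 𝒜, SubsetSumsSeparated f r (insert (insert i t) 𝒜) := by
  obtain ⟨g, hg, hgi⟩ := exists_dual_vector'' ℝ (f i)
  obtain ⟨t, ht, hmax⟩ := 𝒜.exists_max_image (fun u => g (∑ j ∈ u, f j)) hne
  have hsep : ∀ u ∈ 𝒜, r ≤ dist (∑ j ∈ insert i t, f j) (∑ j ∈ u, f j) := fun u hu =>
    calc r ≤ ‖f i‖ + (g (∑ j ∈ t, f j) - g (∑ j ∈ u, f j)) := by linarith [hmax u hu]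
      _ = g (∑ j ∈ insert i t, f j - ∑ j ∈ u, f j) := by
        rw [sum_insert (hi t ht), map_sub, map_add, hgi, RCLike.ofReal_real_eq_id, id]; ring
      _ ≤ ‖g (∑ j ∈ insert i t, f j - ∑ j ∈ u, f j)‖ := Real.le_norm_self _
      _ ≤ dist (∑ j ∈ insert i t, f j) (∑ j ∈ u, f j) := by
        rw [dist_eq_norm]; exact g.le_of_opNorm_le hg _ |>.trans_eq (one_mul _)
  refine ⟨t, ht, ?_⟩
  rw [SubsetSumsSeparated, coe_insert]
  exact h.insert fun u hu _ => ⟨hsep u hu, dist_comm (α := E) _ _ ▸ hsep u hu⟩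

end SubsetSumsSeparated

def splitCover [DecidableEq ι] (i : ι) (top : Finset (Finset ι) → Finset ι)
    (P : Finset (Finset (Finset ι))) : Finset (Finset (Finset ι)) :=
  P.image (fun 𝒜 => insert (insert i (top 𝒜)) 𝒜) ∪
    {𝒜 ∈ P | 1 < #𝒜}.image fun 𝒜 => (𝒜.erase (top 𝒜)).image (insert i)

theorem forall_mem_splitCover [DecidableEq ι] {i : ι} {top : Finset (Finset ι) → Finset ι}
    {P : Finset (Finset (Finset ι))} {p : Finset (Finset ι) → Prop} :
    (∀ 𝒜' ∈ splitCover i top P, p 𝒜') ↔ (∀ 𝒜 ∈ P, p (insert (insert i (top 𝒜)) 𝒜)) ∧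
      ∀ 𝒜 ∈ P, 1 < #𝒜 → p ((𝒜.erase (top 𝒜)).image (insert i)) := by
  simp only [splitCover, forall_mem_union, forall_mem_image, mem_filter, and_imp]

structure IsKleitmanCover_s5 (f : ι → E) (r : ℝ) (s : Finset ι) (P : Finset (Finset (Finset ι))) :
    Prop where
  subset : ∀ 𝒜 ∈ P, ∀ t ∈ 𝒜, t ⊆ s
  nonempty : ∀ 𝒜 ∈ P, 𝒜.Nonempty
  separated : ∀ 𝒜 ∈ P, SubsetSumsSeparated f r 𝒜
  exists_mem : ∀ t ⊆ s, ∃ 𝒜 ∈ P, t ∈ 𝒜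
  card_filter_lt_card_le : ∀ k, #{𝒜 ∈ P | k < #𝒜} ≤ longChainCount #s k

namespace IsKleitmanCover_s5

variable {f : ι → E} {r : ℝ} {s : Finset ι} {P : Finset (Finset (Finset ι))} {i : ι}

theorem empty (f : ι → E) (r : ℝ) : IsKleitmanCover_s5 f r ∅ {{∅}} where
  subset := by simp
  nonempty := by simp
  separated := by simp [SubsetSumsSeparated]
  exists_mem := by simp
  card_filter_lt_card_le k := by rcases k with _ | k <;> simp [longChainCount, filter_singleton]

theorem notMem_of_mem (hP : IsKleitmanCover_s5 f r s P) (hi : i ∉ s) {𝒜 : Finset (Finset ι)}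
    (h𝒜 : 𝒜 ∈ P) {t : Finset ι} (ht : t ∈ 𝒜) : i ∉ t :=
  fun hit => hi (hP.subset 𝒜 h𝒜 t ht hit)

variable [DecidableEq ι] {top : Finset (Finset ι) → Finset ι}

theorem exists_mem_splitCover (hP : IsKleitmanCover_s5 f r s P) (htop : ∀ 𝒜 ∈ P, top 𝒜 ∈ 𝒜)
    {t : Finset ι} (ht : t ⊆ insert i s) : ∃ 𝒜 ∈ splitCover i top P, t ∈ 𝒜 := by
  by_cases hit : i ∈ t
  · obtain ⟨𝒜, h𝒜, ht𝒜⟩ := hP.exists_mem (t.erase i) (subset_insert_iff.1 ht)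
    by_cases htop' : t.erase i = top 𝒜
    · refine ⟨_, mem_union_left _ (mem_image_of_mem _ h𝒜), ?_⟩
      rw [← insert_erase hit, htop']
      exact mem_insert_self _ _
    · have h𝒜₁ : 1 < #𝒜 := one_lt_card.2 ⟨_, ht𝒜, _, htop 𝒜 h𝒜, htop'⟩
      refine ⟨_, mem_union_right _ (mem_image_of_mem _ (mem_filter.2 ⟨h𝒜, h𝒜₁⟩)), ?_⟩
      rw [← insert_erase hit]
      exact mem_image_of_mem _ (mem_erase.2 ⟨htop', ht𝒜⟩)
  · obtain ⟨𝒜, h𝒜, ht𝒜⟩ := hP.exists_mem t ((subset_insert_iff_of_notMem hit).1 ht)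
    exact ⟨_, mem_union_left _ (mem_image_of_mem _ h𝒜), mem_insert_of_mem ht𝒜⟩

theorem card_filter_lt_splitCover_le (hP : IsKleitmanCover_s5 f r s P) (hi : i ∉ s)
    (htop : ∀ 𝒜 ∈ P, top 𝒜 ∈ 𝒜) (k : ℕ) :
    #{𝒜 ∈ splitCover i top P | k < #𝒜} ≤ #{𝒜 ∈ P | k - 1 < #𝒜} + #{𝒜 ∈ P | k + 1 < #𝒜} := by
  rw [splitCover, filter_union, filter_image, filter_image]
  refine (card_union_le _ _).trans (add_le_add (card_image_le.trans (card_le_card ?_))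
    (card_image_le.trans (card_le_card ?_))) <;> intro 𝒜 h <;> simp only [mem_filter] at h ⊢
  · rw [card_insert_of_notMem fun h' => hP.notMem_of_mem hi h.1 h' (mem_insert_self i _)] at h
    have := card_pos.2 (hP.nonempty 𝒜 h.1)
    exact ⟨h.1, by omega⟩
  · rw [card_image_insert_of_forall_notMem fun t ht => hP.notMem_of_mem hi h.1.1
      (mem_of_mem_erase ht), card_erase_of_mem (htop 𝒜 h.1.1)] at h
    exact ⟨h.1.1, by omega⟩

theorem exists_insert [NormedSpace ℝ E] (hP : IsKleitmanCover_s5 f r s P)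
    (hi : i ∉ s) (hfi : r ≤ ‖f i‖) : ∃ P', IsKleitmanCover_s5 f r (insert i s) P' := by
  choose! top htop htop_sep using fun 𝒜 h𝒜 => (hP.separated 𝒜 h𝒜).exists_insert_insert
    (hP.nonempty 𝒜 h𝒜) (fun _ => hP.notMem_of_mem hi h𝒜) hfi
  refine ⟨splitCover i top P, ⟨forall_mem_splitCover.2 ⟨fun 𝒜 h𝒜 t ht => ?_, fun 𝒜 h𝒜 _ t ht => ?_⟩,
    forall_mem_splitCover.2 ⟨fun 𝒜 _ => insert_nonempty _ _, fun 𝒜 h𝒜 h𝒜₁ => ?_⟩,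
    forall_mem_splitCover.2 ⟨htop_sep, fun 𝒜 h𝒜 _ => ?_⟩,
    fun t => hP.exists_mem_splitCover htop, fun k => ?_⟩⟩
  · rcases mem_insert.1 ht with rfl | ht
    · exact insert_subset_insert i (hP.subset 𝒜 h𝒜 _ (htop 𝒜 h𝒜))
    · exact (hP.subset 𝒜 h𝒜 t ht).trans (subset_insert i s)
  · obtain ⟨u, hu, rfl⟩ := mem_image.1 ht
    exact insert_subset_insert i (hP.subset 𝒜 h𝒜 u (mem_of_mem_erase hu))
  · exact image_nonempty.2 ((erase_nonempty (htop 𝒜 h𝒜)).2 (one_lt_card_iff_nontrivial.1 h𝒜₁))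
  · exact ((hP.separated 𝒜 h𝒜).mono (erase_subset _ _)).image_insert
      fun t ht => hP.notMem_of_mem hi h𝒜 (mem_of_mem_erase ht)
  · calc #{𝒜 ∈ splitCover i top P | k < #𝒜}
        ≤ longChainCount #s (k - 1) + longChainCount #s (k + 1) :=
          (hP.card_filter_lt_splitCover_le hi htop k).trans
            (add_le_add (hP.card_filter_lt_card_le _) (hP.card_filter_lt_card_le _))
      _ = longChainCount #(insert i s) k := by
          rw [card_insert_of_notMem hi, longChainCount_pred_add_succ]

end IsKleitmanCover_s5

theorem exists_isKleitmanCover_s5 [NormedSpace ℝ E] [DecidableEq ι]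
    (f : ι → E) (r : ℝ) (s : Finset ι) (hf : ∀ i ∈ s, r ≤ ‖f i‖) :
    ∃ P, IsKleitmanCover_s5 f r s P := by
  induction s using Finset.induction_on with
  | empty => exact ⟨_, .empty f r⟩
  | insert i s hi ih =>
    obtain ⟨P, hP⟩ := ih fun j hj => hf j (mem_insert_of_mem hj)
    exact hP.exists_insert hi (hf i (mem_insert_self i s))

theorem card_le_choose_of_sum_mem_ball [NormedSpace ℝ E]
    (f : ι → E) {r : ℝ} (s : Finset ι) (hf : ∀ i ∈ s, r ≤ ‖f i‖) (x : E)
    {𝒯 : Finset (Finset ι)} (h𝒯 : ∀ t ∈ 𝒯, t ⊆ s ∧ ∑ j ∈ t, f j ∈ Metric.ball x (r / 2)) :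
    #𝒯 ≤ (#s).choose (#s / 2) := by
  classical
  obtain ⟨P, hP⟩ := exists_isKleitmanCover_s5 f r s hf
  choose! F hF hmem using fun t (ht : t ⊆ s) => hP.exists_mem t ht
  calc #𝒯 ≤ #{𝒜 ∈ P | 0 < #𝒜} := by
        refine card_le_card_of_injOn F (fun t ht => ?_) fun t ht u hu hFtu => ?_
        · have hts := (h𝒯 t ht).1
          exact mem_filter.2 ⟨hF t hts, card_pos.2 ⟨t, hmem t hts⟩⟩
        · obtain ⟨hts, htx⟩ := h𝒯 t ht
          obtain ⟨hus, hux⟩ := h𝒯 u hu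
          exact (hP.separated _ (hF t hts)).eq_of_sum_mem_ball (hmem t hts) (hFtu ▸ hmem u hus)
            htx hux
    _ ≤ longChainCount #s 0 := hP.card_filter_lt_card_le 0
    _ = (#s).choose (#s / 2) := by simp [longChainCount]

theorem kleitman_littlewood_offord_general (n d : ℕ)
    (v₀ : EuclideanSpace ℝ (Fin d)) (v : Fin n → EuclideanSpace ℝ (Fin d))
    (hv : ∀ i : Fin n, 2 ≤ ‖v i‖) :
    {ε : Fin n → Bool | ‖v₀ + ∑ j, (if ε j then (1 : ℝ) else 0) • v j‖ < 1}.ncard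
      ≤ n.choose (n / 2) := by
  classical
  set S := {ε : Fin n → Bool | ‖v₀ + ∑ j, (if ε j then (1 : ℝ) else 0) • v j‖ < 1}
  set φ : (Fin n → Bool) → Finset (Fin n) := fun ε => {j | ε j}
  have hφ : Function.Injective φ := fun ε ε' h => funext fun j => by
    have hj := congrArg (j ∈ ·) h
    simp only [φ, mem_filter, mem_univ, true_and, eq_iff_iff] at hj
    exact Bool.coe_iff_coe.1 hj
  calc S.ncard = #(S.toFinset.image φ) := by
        rw [Set.ncard_eq_toFinset_card', card_image_of_injective _ hφ]
    _ ≤ (#(univ : Finset (Fin n))).choose (#(univ : Finset (Fin n)) / 2) := by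
        refine card_le_choose_of_sum_mem_ball v univ (fun i _ => hv i) (-v₀) fun _ ht => ?_
        obtain ⟨ε, hε, rfl⟩ := mem_image.1 ht
        rw [Set.mem_toFinset, Set.mem_ofPred_eq] at hε
        simp only [boole_smul, ← sum_filter] at hε
        refine ⟨subset_univ _, ?_⟩
        rwa [Metric.mem_ball, dist_eq_norm, sub_neg_eq_add, add_comm, div_self two_ne_zero]
    _ = n.choose (n / 2) := by rw [card_univ, Fintype.card_fin]

/-- Kleitman's theorem on the Littlewood–Offord problem: if `v₁, …, vₙ ∈ ℝ^d` all have
Euclidean norm at least `2`, then at most `binomial(n, ⌊n/2⌋)` of the vertices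
`v₀ + ∑ i, ε i • v i` (for `ε ∈ {0,1}^n`) of the parallelepiped lie in the open unit ball. -/
theorem kleitman_littlewood_offord (n d : ℕ) (hn : 1 ≤ n) (hd : 1 ≤ d)
    (v₀ : EuclideanSpace ℝ (Fin d)) (v : Fin n → EuclideanSpace ℝ (Fin d))
    (hv : ∀ i : Fin n, 2 ≤ ‖v i‖) :
    {ε : Fin n → Bool | ‖v₀ + ∑ j, (if ε j then (1 : ℝ) else 0) • v j‖ < 1}.ncard
      ≤ n.choose (n / 2) :=
  kleitman_littlewood_offord_general n d v₀ v hv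
end

section
/- Let n ≥ 1 and let (q_{ij}) be a real symmetric n×n matrix with q_{ij} < 0 for all i ≠ j. Let Θ(x) = Σ_{i,j} q_{ij} x_i x_j. Then the set of strict local maxima of Θ on {0,1}^n, viewed as a family of subsets of [n] via supports, is an antichain: there do not exist strict local maxima B, C with B ⊋ C (coordinatewise B ≥ C and B ≠ C). -/
open scoped symmDiff

/-- The 0/1 real vector (indicator vector) of a subset `A ⊆ [n]`. -/
def memInd {n : ℕ} (A : Finset (Fin n)) : Fin n → ℝ := fun i => if i ∈ A then 1 else 0

/-- A subset `A ⊆ [n]`, viewed as a point of `{0,1}^n` via its indicator vector, is a strict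
local maximum of `Θ` on the discrete cube: its value is strictly larger than at every
neighbor, obtained by flipping exactly one coordinate (i.e. `A ∆ {i}`). -/
def IsStrictLocalMaxSet {n : ℕ} (Θ : (Fin n → ℝ) → ℝ) (A : Finset (Fin n)) : Prop :=
  ∀ i : Fin n, Θ (memInd A) > Θ (memInd (A ∆ {i}))

/-- If `(q i j)` is a real symmetric matrix with all off-diagonal entries negative, then the
strict local maxima on `{0,1}^n` of `Θ(x) = ∑ i j, q i j * x i * x j`, viewed as subsets of
`[n]`, form an antichain: there are no strict local maxima `B ⊋ C`. -/
theorem negative_offdiagonal_antichain (n : ℕ) (hn : 1 ≤ n)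
    (q : Fin n → Fin n → ℝ) (hsymm : ∀ i j, q i j = q j i)
    (hneg : ∀ i j, i ≠ j → q i j < 0)
    (Θ : (Fin n → ℝ) → ℝ)
    (hΘ : ∀ x : Fin n → ℝ, Θ x = ∑ i, ∑ j, q i j * x i * x j) :
    ¬ ∃ B C : Finset (Fin n),
        IsStrictLocalMaxSet Θ B ∧ IsStrictLocalMaxSet Θ C ∧ C ⊂ B := by
  -- value of Θ at an indicator vector
  have hval : ∀ A : Finset (Fin n), Θ (memInd A) = ∑ i ∈ A, ∑ j ∈ A, q i j := by
    intro A
    rw [hΘ]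
    simp only [memInd, mul_ite, mul_one, mul_zero, ite_mul, zero_mul]
    simp only [Finset.sum_ite_mem, Finset.univ_inter]
    rw [Finset.sum_comm]
    simp only [Finset.sum_ite_mem, Finset.univ_inter]
    exact Finset.sum_comm
  -- insertion formula
  have hins : ∀ (A : Finset (Fin n)) (i : Fin n), i ∉ A →
      (∑ a ∈ insert i A, ∑ b ∈ insert i A, q a b)
        = (∑ a ∈ A, ∑ b ∈ A, q a b) + (q i i + 2 * ∑ j ∈ A, q i j) := by
    intro A i hi
    rw [Finset.sum_insert hi, Finset.sum_insert hi]
    have : ∀ a ∈ A, (∑ b ∈ insert i A, q a b) = q i a + ∑ b ∈ A, q a b := by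
      intro a ha
      rw [Finset.sum_insert hi, hsymm]
    rw [Finset.sum_congr rfl this, Finset.sum_add_distrib]
    ring
  -- characterization of strict local max
  have hkey : ∀ (A : Finset (Fin n)) (i : Fin n), IsStrictLocalMaxSet Θ A →
      (i ∈ A → q i i + 2 * ∑ j ∈ A.erase i, q i j > 0) ∧
      (i ∉ A → q i i + 2 * ∑ j ∈ A, q i j < 0) := by
    intro A i hA
    have h := hA i
    constructor
    · intro hi
      have hsd : A ∆ {i} = A.erase i := by
        ext a
        simp only [Finset.mem_symmDiff, Finset.mem_singleton, Finset.mem_erase]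
        rcases eq_or_ne a i with rfl | h
        · simp [hi]
        · simp [h]
      rw [hsd, hval, hval] at h
      have hins' := hins (A.erase i) i (Finset.notMem_erase i A)
      rw [Finset.insert_erase hi] at hins'
      linarith
    · intro hi
      have hsd : A ∆ {i} = insert i A := by
        ext a
        simp only [Finset.mem_symmDiff, Finset.mem_singleton, Finset.mem_insert]
        rcases eq_or_ne a i with rfl | h
        · simp [hi]
        · simp [h]
      rw [hsd, hval, hval, hins A i hi] at h
      linarith
  rintro ⟨B, C, hB, hC, hCB⟩
  obtain ⟨i, hiB, hiC⟩ := Finset.exists_of_ssubset hCB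
  have h1 := (hkey B i hB).1 hiB
  have h2 := (hkey C i hC).2 hiC
  have hsub : C ⊆ B.erase i := fun x hx =>
    Finset.mem_erase.mpr ⟨fun h => hiC (h ▸ hx), hCB.1 hx⟩
  have hle : (∑ j ∈ B.erase i, q i j) ≤ ∑ j ∈ C, q i j := by
    rw [← Finset.sum_sdiff hsub]
    have : (∑ j ∈ B.erase i \ C, q i j) ≤ 0 := by
      apply Finset.sum_nonpos
      intro j hj
      have hj' := (Finset.mem_erase.mp (Finset.mem_sdiff.mp hj).1).1
      exact le_of_lt (hneg i j (fun h => hj' h.symm))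
    linarith
  linarith
end

section
/- Let n ≥ 1, let (q_{ij}) be a real symmetric n×n matrix, and let Θ(x) = Σ_{i,j} q_{ij} x_i x_j. For each i ∈ [n] set S_i = {j ∈ [n] : j ≠ i and q_{ij} > 0}. Then there do not exist strict local maxima B, C of Θ on {0,1}^n (identified with subsets of [n]) and an index i such that i ∈ B, i ∉ C, and B Δ S_i ⊇ C Δ S_i. -/
open scoped symmDiff

/-- For `(q i j)` real symmetric, `Θ(x) = ∑ i j, q i j * x i * x j`, and
`S i = {j ≠ i : q i j > 0}`, there do not exist strict local maxima `B, C` of `Θ` on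
`{0,1}^n` and an index `i` with `i ∈ B`, `i ∉ C` and `B ∆ S i ⊇ C ∆ S i`. -/
theorem local_maxima_symmDiff_incomparable (n : ℕ) (hn : 1 ≤ n)
    (q : Fin n → Fin n → ℝ) (hsymm : ∀ i j, q i j = q j i)
    (Θ : (Fin n → ℝ) → ℝ)
    (hΘ : ∀ x : Fin n → ℝ, Θ x = ∑ i, ∑ j, q i j * x i * x j)
    (S : Fin n → Finset (Fin n))
    (hS : ∀ i : Fin n, S i = Finset.univ.filter (fun j => j ≠ i ∧ 0 < q i j)) :
    ¬ ∃ (B C : Finset (Fin n)) (i : Fin n),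
        IsStrictLocalMaxSet Θ B ∧ IsStrictLocalMaxSet Θ C ∧
        i ∈ B ∧ i ∉ C ∧ C ∆ S i ⊆ B ∆ S i := by
  rintro ⟨B, C, i, hB, hC, hiB, hiC, hsub⟩
  set T : Finset (Fin n) → ℝ := fun A => ∑ j ∈ A, ∑ k ∈ A, q j k with hTdef
  have hind : ∀ (A : Finset (Fin n)) (f : Fin n → ℝ),
      ∑ k, f k * memInd A k = ∑ k ∈ A, f k := by
    intro A f
    simp only [memInd, mul_ite, mul_one, mul_zero]
    rw [Finset.sum_ite_mem, Finset.univ_inter]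
  have hT : ∀ A : Finset (Fin n), Θ (memInd A) = T A := by
    intro A
    rw [hΘ]
    calc ∑ j, ∑ k, q j k * memInd A j * memInd A k
        = ∑ j, (∑ k, q j k * memInd A k) * memInd A j := by
          refine Finset.sum_congr rfl fun j _ => ?_
          rw [Finset.sum_mul]
          exact Finset.sum_congr rfl fun k _ => by ring
      _ = ∑ j ∈ A, ∑ k, q j k * memInd A k := hind A _
      _ = ∑ j ∈ A, ∑ k ∈ A, q j k := Finset.sum_congr rfl fun j _ => hind A _
  have hins : ∀ (A : Finset (Fin n)), i ∉ A →
      T (insert i A) = T A + (q i i + 2 * ∑ j ∈ A, q i j) := by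
    intro A hi
    simp only [hTdef]
    rw [Finset.sum_insert hi, Finset.sum_insert hi]
    rw [Finset.sum_congr rfl (fun j (_ : j ∈ A) => Finset.sum_insert hi (f := q j)),
      Finset.sum_add_distrib]
    rw [Finset.sum_congr rfl (fun j (_ : j ∈ A) => hsymm j i)]
    ring
  -- local max at B:  positive gain from i
  have hBpos : 0 < q i i + 2 * ∑ j ∈ B.erase i, q i j := by
    have hd : B ∆ ({i} : Finset (Fin n)) = B.erase i := by
      ext j
      by_cases hj : j = i <;> simp [Finset.mem_symmDiff, hj, hiB]
    have := hB i
    rw [hd, hT, hT] at this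
    have hBi : T B = T (B.erase i) + (q i i + 2 * ∑ j ∈ B.erase i, q i j) := by
      conv_lhs => rw [← Finset.insert_erase hiB]
      exact hins _ (Finset.notMem_erase i B)
    linarith [this, hBi.ge, hBi.le]
  -- local max at C:  negative gain from i
  have hCneg : q i i + 2 * ∑ j ∈ C, q i j < 0 := by
    have hd : C ∆ ({i} : Finset (Fin n)) = insert i C := by
      ext j
      by_cases hj : j = i <;> simp [Finset.mem_symmDiff, hj, hiC]
    have := hC i
    rw [hd, hT, hT, hins C hiC] at this
    linarith
  -- comparison of the two linear terms
  have hcmp : ∑ j ∈ B.erase i, q i j ≤ ∑ j ∈ C, q i j := by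
    have e1 : ∑ j ∈ B.erase i, q i j
        = ∑ j ∈ Finset.univ.erase i, (if j ∈ B then q i j else 0) := by
      rw [Finset.sum_ite_mem]
      apply Finset.sum_congr _ fun _ _ => rfl
      ext j
      simp [Finset.mem_erase, and_comm]
    have e2 : ∑ j ∈ C, q i j
        = ∑ j ∈ Finset.univ.erase i, (if j ∈ C then q i j else 0) := by
      rw [Finset.sum_ite_mem]
      apply Finset.sum_congr _ fun _ _ => rfl
      ext j
      simp only [Finset.mem_inter, Finset.mem_erase, Finset.mem_univ, and_true]
      constructor
      · intro hj; exact ⟨fun h => hiC (h ▸ hj), hj⟩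
      · exact fun h => h.2
    rw [e1, e2]
    apply Finset.sum_le_sum
    intro j hj
    have hji : j ≠ i := (Finset.mem_erase.1 hj).1
    by_cases hq : 0 < q i j
    · have hjS : j ∈ S i := by rw [hS]; simp [hji, hq]
      by_cases hjB : j ∈ B
      · have hjC : j ∈ C := by
          by_contra hjC
          have h1 : j ∈ C ∆ S i := Finset.mem_symmDiff.2 (Or.inr ⟨hjS, hjC⟩)
          have h2 := hsub h1
          rw [Finset.mem_symmDiff] at h2
          tauto
        simp [hjB, hjC]
      · by_cases hjC : j ∈ C <;> simp [hjB, hjC] <;> linarith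
    · push_neg at hq
      have hjS : j ∉ S i := by
        rw [hS]
        simp only [Finset.mem_filter, Finset.mem_univ, true_and, not_and]
        intro _
        exact not_lt.2 hq
      by_cases hjC : j ∈ C
      · have hjB : j ∈ B := by
          have h1 : j ∈ C ∆ S i := Finset.mem_symmDiff.2 (Or.inl ⟨hjC, hjS⟩)
          have h2 := hsub h1
          rw [Finset.mem_symmDiff] at h2
          tauto
        simp [hjB, hjC]
      · by_cases hjB : j ∈ B <;> simp [hjB, hjC] <;> linarith
  linarith
end

section
/- Let n ≥ 1, let S_i ⊆ [n] for each i ∈ [n], and let F be a family of subsets of [n] satisfying: for each i, no element of (F Δ S_i)^{i+} contains an element of (F Δ S_i)^{i-}. Then for any fixed index k, the same hypothesis holds after replacing S_k by its complement [n] \ S_k (keeping all other S_i and F unchanged). -/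
open scoped symmDiff

lemma symmDiff_compl_eq (n : ℕ) (X T : Finset (Fin n)) :
    X ∆ (Finset.univ \ T) = (X ∆ T)ᶜ := by
  ext x
  simp only [Finset.mem_symmDiff, Finset.mem_compl, Finset.mem_sdiff, Finset.mem_univ, true_and]
  tauto

/-- The hypothesis of the generalized Sperner theorem is invariant under replacing any one
of the sets `S k` by its complement `[n] \ S k`: if for each `i` no element of
`(F ∆ S i)^{i+}` contains an element of `(F ∆ S i)^{i-}`, the same holds for the sets
obtained by replacing `S k` with `Finset.univ \ S k`. -/
theorem complement_invariance (n : ℕ) (hn : 1 ≤ n)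
    (S : Fin n → Finset (Fin n)) (F : Finset (Finset (Fin n)))
    (h : ∀ i : Fin n, ∀ A B : Finset (Fin n),
      i ∉ A → insert i A ∈ F.image (fun X => X ∆ S i) →
      i ∉ B → B ∈ F.image (fun X => X ∆ S i) → ¬ B ⊆ A)
    (k : Fin n) :
    ∀ i : Fin n, ∀ A B : Finset (Fin n),
      i ∉ A →
      insert i A ∈ F.image (fun X => X ∆ (Function.update S k (Finset.univ \ S k) i)) →
      i ∉ B →
      B ∈ F.image (fun X => X ∆ (Function.update S k (Finset.univ \ S k) i)) →
      ¬ B ⊆ A := by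
  intro i A B hiA hA hiB hB
  by_cases hik : i = k
  · subst hik
    rw [Function.update_self] at hA hB
    simp only [Finset.mem_image] at hA hB
    obtain ⟨X, hX, hXA⟩ := hA
    obtain ⟨Y, hY, hYB⟩ := hB
    rw [symmDiff_compl_eq] at hXA hYB
    -- apply h at i with A' := Bᶜ \ {i}, B' := (insert i A)ᶜ
    have h1 : i ∉ Bᶜ \ {i} := by simp
    have h2 : insert i (Bᶜ \ {i}) ∈ F.image (fun X => X ∆ S i) := by
      have : insert i (Bᶜ \ {i}) = Bᶜ := by
        ext x
        by_cases hx : x = i <;> simp [hx, hiB]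
      rw [this]
      exact Finset.mem_image.2 ⟨Y, hY, by rw [← hYB, compl_compl]⟩
    have h3 : i ∉ (insert i A)ᶜ := by simp
    have h4 : (insert i A)ᶜ ∈ F.image (fun X => X ∆ S i) := by
      exact Finset.mem_image.2 ⟨X, hX, by rw [← hXA, compl_compl]⟩
    have := h i (Bᶜ \ {i}) ((insert i A)ᶜ) h1 h2 h3 h4
    intro hBA
    apply this
    intro x hx
    simp only [Finset.mem_compl, Finset.mem_insert, not_or] at hx
    simp only [Finset.mem_sdiff, Finset.mem_compl, Finset.mem_singleton]
    exact ⟨fun hxB => hx.2 (hBA hxB), hx.1⟩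
  · rw [Function.update_of_ne hik] at hA hB
    exact h i A B hiA hA hiB hB
end

section
/- Let T be a tournament on a finite vertex set V whose edges are colored by elements of a set C of colors. Then the following are equivalent: (1) for every subset of the colors, the tournament obtained from T by reversing the direction of every edge whose color lies in that subset is acyclic; (2) no triangle of T has three distinctly colored edges, every triangle whose three edges share one color is acyclic (non-cyclically oriented), and every triangle with exactly two distinct edge colors has its two same-colored edges either both leaving a common vertex or both entering a common vertex. -/
/-- A directed cycle in a relation `T`: at least three distinct vertices, each with an edge
to the next, cyclically. -/
def HasCycle {V : Type*} (T : V → V → Prop) : Prop :=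
  ∃ (k : ℕ) (f : Fin (k + 3) → V), Function.Injective f ∧ ∀ i, T (f i) (f (i + 1))

lemma triangle_cycle {V : Type*} (S : V → V → Prop) {x y z : V}
    (hxy : x ≠ y) (hyz : y ≠ z) (hxz : x ≠ z)
    (h1 : S x y) (h2 : S y z) (h3 : S z x) : HasCycle S := by
  refine ⟨0, ![x, y, z], ?_, ?_⟩
  · intro i j hij
    fin_cases i <;> fin_cases j <;> simp_all
  · intro i
    fin_cases i <;> simpa using ‹_›

lemma no_cycle_of_no_triangle {V : Type*} (S : V → V → Prop)
    (total : ∀ x y : V, x ≠ y → S x y ∨ S y x)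
    (notri : ∀ x y z : V, x ≠ y → y ≠ z → x ≠ z → ¬ (S x y ∧ S y z ∧ S z x)) :
    ¬ HasCycle S := by
  rintro ⟨k, f, hinj, hcyc⟩
  induction k with
  | zero =>
    refine notri (f 0) (f 1) (f 2)
      (fun h => absurd (hinj h) (by decide))
      (fun h => absurd (hinj h) (by decide))
      (fun h => absurd (hinj h) (by decide)) ⟨?_, ?_, ?_⟩
    · simpa using hcyc 0
    · simpa using hcyc 1
    · simpa using hcyc 2
  | succ m ih =>
    have step : ∀ (i j : Fin (m + 1 + 3)), (i.val + 1) % (m + 1 + 3) = j.val →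
        S (f i) (f j) := by
      intro i j h
      have e : i + 1 = j := by
        rw [Fin.ext_iff, Fin.add_def]
        simpa [Fin.val_one'] using h
      have := hcyc i
      rwa [e] at this
    have hne : ∀ (a b : ℕ) (ha : a < m + 1 + 3) (hb : b < m + 1 + 3), a ≠ b →
        f ⟨a, ha⟩ ≠ f ⟨b, hb⟩ := by
      intro a b ha hb hab h
      exact hab (Fin.mk.injEq .. ▸ (hinj h))
    by_cases h20 : S (f ⟨2, by omega⟩) (f ⟨0, by omega⟩)
    · exact notri (f ⟨0, by omega⟩) (f ⟨1, by omega⟩) (f ⟨2, by omega⟩)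
        (hne 0 1 _ _ (by omega)) (hne 1 2 _ _ (by omega)) (hne 0 2 _ _ (by omega))
        ⟨step _ _ (by simp), step _ _ (by simp), h20⟩
    · have h02 : S (f ⟨0, by omega⟩) (f ⟨2, by omega⟩) :=
        (total _ _ (hne 0 2 _ _ (by omega))).resolve_right h20
      refine ih (fun j => if j.val = 0 then f ⟨0, by omega⟩ else f ⟨j.val + 1, by omega⟩)
        ?_ ?_
      · intro i j hij
        simp only at hij
        split_ifs at hij with hi hj hj
        · exact Fin.ext (by omega)
        · exact absurd (Fin.mk.injEq .. ▸ hinj hij) (by omega)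
        · exact absurd (Fin.mk.injEq .. ▸ hinj hij) (by omega)
        · have := Fin.mk.injEq .. ▸ hinj hij
          exact Fin.ext (by omega)
      · intro i
        have hiv : i.val < m + 3 := i.isLt
        have hval : ((i + 1 : Fin (m + 3))).val = if i.val = m + 2 then 0 else i.val + 1 := by
          rw [Fin.val_add_one]
          by_cases h : i.val = m + 2
          · rw [if_pos h, if_pos (Fin.ext h)]
          · rw [if_neg h, if_neg (fun hh => h (by rw [hh]; rfl))]
        by_cases him : i.val = m + 2
        · have h1 : ((i + 1 : Fin (m + 3))).val = 0 := by rw [hval, if_pos him]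
          have hi0 : ¬ i.val = 0 := by omega
          simp only [h1, hi0, if_false, if_true, reduceIte, if_neg, if_pos]
          refine step ⟨i.val + 1, by omega⟩ ⟨0, by omega⟩ ?_
          show (i.val + 1 + 1) % (m + 1 + 3) = 0
          rw [show i.val + 1 + 1 = m + 1 + 3 by omega, Nat.mod_self]
        · have h1 : ((i + 1 : Fin (m + 3))).val = i.val + 1 := by rw [hval, if_neg him]
          by_cases hi0 : i.val = 0
          · simp only [h1, hi0, reduceIte]
            simpa using h02
          · simp only [h1, if_neg hi0, if_neg (by omega : ¬ i.val + 1 = 0)]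
            refine step ⟨i.val + 1, by omega⟩ ⟨i.val + 1 + 1, by omega⟩ ?_
            show (i.val + 1 + 1) % (m + 1 + 3) = i.val + 1 + 1
            rw [Nat.mod_eq_of_lt]
            omega


lemma two_edge_contra {M a a' b b' : Prop}
    (h1 : (M ∧ a') ∨ (¬M ∧ a)) (h2 : (M ∧ b') ∨ (¬M ∧ b))
    (A1 : a ↔ ¬ a') (A2 : b ↔ ¬ b')
    (cc : (a' ∧ b) ∨ (a ∧ b')) : False := by
  tauto

/-- For an edge-colored tournament `T` on a finite vertex set (with `hT` expressing that `T`
is a tournament and `hcol` that the coloring is a well-defined coloring of undirected edges),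
the following are equivalent:
(1) for every subset `D` of the colors, the tournament obtained by reversing all edges whose
color lies in `D` is acyclic;
(2) no triangle has three distinctly colored edges, every monochromatic triangle is acyclic,
and in every triangle with exactly two distinct edge colors the two same-colored edges either
both leave or both enter their common vertex. -/
theorem colored_acyclicity_characterization {V C : Type*} [Fintype V]
    (T : V → V → Prop) (col : V → V → C)
    (hT : ∀ x y : V, x ≠ y → (T x y ↔ ¬ T y x))
    (hcol : ∀ x y : V, col x y = col y x) :
    ((∀ D : Set C,
        ¬ HasCycle (fun x y => (col x y ∈ D ∧ T y x) ∨ (col x y ∉ D ∧ T x y))) ↔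
      ((∀ x y z : V, x ≠ y → y ≠ z → x ≠ z →
          ¬ (col x y ≠ col y z ∧ col y z ≠ col x z ∧ col x y ≠ col x z)) ∧
       (∀ x y z : V, x ≠ y → y ≠ z → x ≠ z →
          col x y = col y z → col y z = col x z → ¬ (T x y ∧ T y z ∧ T z x)) ∧
       (∀ x y z : V, x ≠ y → y ≠ z → x ≠ z →
          col x y = col y z → col x z ≠ col x y →
          ((T y x ∧ T y z) ∨ (T x y ∧ T z y))))) := by
  constructor
  · intro hAc
    refine ⟨?_, ?_, ?_⟩
    · -- no rainbow triangle
      rintro x y z hxy hyz hxz ⟨hab, hbc, hac⟩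
      by_cases t1 : T x y <;> by_cases t2 : T y z <;> by_cases t3 : T z x
      · exact hAc ∅ (triangle_cycle _ hxy hyz hxz (Or.inr ⟨by simp, t1⟩)
          (Or.inr ⟨by simp, t2⟩) (Or.inr ⟨by simp, t3⟩))
      · exact hAc {col x z} (triangle_cycle _ hxy hyz hxz
          (Or.inr ⟨by simpa using hac, t1⟩)
          (Or.inr ⟨by simpa using hbc, t2⟩)
          (Or.inl ⟨by simp [hcol z x], (hT x z hxz).mpr t3⟩))
      · exact hAc {col y z} (triangle_cycle _ hxy hyz hxz
          (Or.inr ⟨by simpa using hab, t1⟩)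
          (Or.inl ⟨by simp, (hT z y hyz.symm).mpr t2⟩)
          (Or.inr ⟨by simp only [Set.mem_singleton_iff, hcol z x]; exact Ne.symm hbc, t3⟩))
      · exact hAc {col x y} (triangle_cycle _ hxz hyz.symm hxy
          (Or.inr ⟨by simpa using Ne.symm hac, (hT x z hxz).mpr t3⟩)
          (Or.inr ⟨by simp only [Set.mem_singleton_iff, hcol z y]; exact Ne.symm hab,
            (hT z y hyz.symm).mpr t2⟩)
          (Or.inl ⟨by simp [hcol y x], t1⟩))
      · exact hAc {col x y} (triangle_cycle _ hxy hyz hxz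
          (Or.inl ⟨by simp, (hT y x hxy.symm).mpr t1⟩)
          (Or.inr ⟨by simp only [Set.mem_singleton_iff]; exact fun h => hab h.symm, t2⟩)
          (Or.inr ⟨by simp only [Set.mem_singleton_iff, hcol z x]; exact Ne.symm hac, t3⟩))
      · exact hAc {col y z} (triangle_cycle _ hxy.symm hxz hyz
          (Or.inr ⟨by simp only [Set.mem_singleton_iff, hcol y x]; exact hab,
            (hT y x hxy.symm).mpr t1⟩)
          (Or.inr ⟨by simpa using Ne.symm hbc, (hT x z hxz).mpr t3⟩)
          (Or.inl ⟨by simp [hcol z y], t2⟩))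
      · exact hAc {col x z} (triangle_cycle _ hyz.symm hxy.symm hxz.symm
          (Or.inr ⟨by simp only [Set.mem_singleton_iff, hcol z y]; exact hbc,
            (hT z y hyz.symm).mpr t2⟩)
          (Or.inr ⟨by simp only [Set.mem_singleton_iff, hcol y x]; exact hac,
            (hT y x hxy.symm).mpr t1⟩)
          (Or.inl ⟨by simp, t3⟩))
      · exact hAc ∅ (triangle_cycle _ hxz hyz.symm hxy
          (Or.inr ⟨by simp, (hT x z hxz).mpr t3⟩)
          (Or.inr ⟨by simp, (hT z y hyz.symm).mpr t2⟩)
          (Or.inr ⟨by simp, (hT y x hxy.symm).mpr t1⟩))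
    · -- monochromatic triangles acyclic
      rintro x y z hxy hyz hxz hab hbc ⟨t1, t2, t3⟩
      exact hAc ∅ (triangle_cycle _ hxy hyz hxz (Or.inr ⟨by simp, t1⟩)
        (Or.inr ⟨by simp, t2⟩) (Or.inr ⟨by simp, t3⟩))
    · -- two-colored triangles
      intro x y z hxy hyz hxz hab hac
      by_contra hcon
      push_neg at hcon
      obtain ⟨hc1, hc2⟩ := hcon
      by_cases t1 : T x y
      · by_cases t2 : T y z
        · by_cases t3 : T z x
          · exact hAc ∅ (triangle_cycle _ hxy hyz hxz (Or.inr ⟨by simp, t1⟩)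
              (Or.inr ⟨by simp, t2⟩) (Or.inr ⟨by simp, t3⟩))
          · exact hAc {col x z} (triangle_cycle _ hxy hyz hxz
              (Or.inr ⟨by simpa using Ne.symm hac, t1⟩)
              (Or.inr ⟨by simp only [Set.mem_singleton_iff, ← hab]; exact Ne.symm hac, t2⟩)
              (Or.inl ⟨by simp [hcol z x], (hT x z hxz).mpr t3⟩))
        · exact hc2 t1 ((hT z y hyz.symm).mpr t2)
      · by_cases t2 : T y z
        · exact hc1 ((hT y x hxy.symm).mpr t1) t2
        · by_cases t3 : T z x
          · have m1 : col z y ∉ ({col x z} : Set C) := by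
              simp only [Set.mem_singleton_iff, hcol z y, ← hab]
              exact Ne.symm hac
            have m2 : col y x ∉ ({col x z} : Set C) := by
              simp only [Set.mem_singleton_iff, hcol y x]
              exact Ne.symm hac
            exact hAc {col x z} (triangle_cycle _ hxz hyz.symm hxy
              (Or.inl ⟨by simp, t3⟩)
              (Or.inr ⟨m1, (hT z y hyz.symm).mpr t2⟩)
              (Or.inr ⟨m2, (hT y x hxy.symm).mpr t1⟩))
          · exact hAc ∅ (triangle_cycle _ hxz hyz.symm hxy
              (Or.inr ⟨by simp, (hT x z hxz).mpr t3⟩)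
              (Or.inr ⟨by simp, (hT z y hyz.symm).mpr t2⟩)
              (Or.inr ⟨by simp, (hT y x hxy.symm).mpr t1⟩))
  · rintro ⟨c1, c2, c3⟩ D
    apply no_cycle_of_no_triangle
    · -- totality
      intro x y hne
      by_cases hm : col x y ∈ D <;> by_cases ht : T x y
      · exact Or.inr (Or.inl ⟨hcol x y ▸ hm, ht⟩)
      · exact Or.inl (Or.inl ⟨hm, (hT y x hne.symm).mpr ht⟩)
      · exact Or.inl (Or.inr ⟨hm, ht⟩)
      · exact Or.inr (Or.inr ⟨by rw [hcol y x]; exact hm, (hT y x hne.symm).mpr ht⟩)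
    · -- no cyclic triangle
      rintro x y z hxy hyz hxz ⟨h1, h2, h3⟩
      have A1 := hT x y hxy
      have A2 := hT y z hyz
      have A3 := hT x z hxz
      rw [show col z x = col x z from hcol z x] at h3
      by_cases hab : col x y = col y z
      · by_cases hbc : col y z = col x z
        · rw [← hab] at h2
          rw [← hab.trans hbc] at h3
          have cyc1 := c2 x y z hxy hyz hxz hab hbc
          have cyc2 := c2 x z y hxz (Ne.symm hyz) hxy (hbc.symm.trans (hcol y z))
            ((hcol z y).trans hab.symm)
          clear c1 c2 c3 hT hcol
          tauto
        · have hac : col x z ≠ col x y := fun h => hbc (hab.symm.trans h.symm)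
          have cc := c3 x y z hxy hyz hxz hab hac
          rw [← hab] at h2
          exact two_edge_contra h1 h2 A1 A2 cc
      · by_cases hbc : col y z = col x z
        · have cc := c3 y z x hyz (Ne.symm hxz) (Ne.symm hxy)
            (hbc.trans (hcol x z)) (fun h => hab ((hcol x y).trans h))
          rw [hbc] at h2
          exact two_edge_contra h2 h3 A2 (iff_not_comm.mp A3) cc
        · by_cases hac : col x y = col x z
          · have cc := c3 y x z (Ne.symm hxy) hxz hyz ((hcol y x).trans hac)
              (fun h => hab ((h.trans (hcol y x)).symm))
            rw [← hac] at h3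
            exact two_edge_contra h1 h3 A1 (iff_not_comm.mp A3) cc.symm
          · exact c1 x y z hxy hyz hxz ⟨hab, hbc, hac⟩
end

section
/- Let T be a tournament on a finite vertex set V and let x, y ∈ V be distinct vertices such that for every z ∈ V with z ∉ {x, y}, the edge between x and z is directed from x to z if and only if the edge between y and z is directed from y to z. Then T contains a directed cycle if and only if the subtournament of T induced on V \ {y} contains a directed cycle. -/
section

variable {V W : Type*} {T : V → V → Prop}

def IsCyclicTriple (T : V → V → Prop) (a b c : V) : Prop :=
  a ≠ b ∧ b ≠ c ∧ c ≠ a ∧ T a b ∧ T b c ∧ T c a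

theorem IsCyclicTriple.rotate {a b c : V} (h : IsCyclicTriple T a b c) :
    IsCyclicTriple T b c a :=
  let ⟨hab, hbc, hca, tab, tbc, tca⟩ := h
  ⟨hbc, hca, hab, tbc, tca, tab⟩

theorem IsCyclicTriple.hasCycle {a b c : V} (h : IsCyclicTriple T a b c) : HasCycle T := by
  obtain ⟨hab, hbc, hca, tab, tbc, tca⟩ := h
  refine ⟨0, ![a, b, c], ?_, ?_⟩
  · intro i j hij
    fin_cases i <;> fin_cases j <;> simp_all [eq_comm]
  · intro i
    fin_cases i <;> simpa

theorem IsCyclicTriple.subtype {p : V → Prop} {a b c : V} (h : IsCyclicTriple T a b c)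
    (ha : p a) (hb : p b) (hc : p c) :
    IsCyclicTriple (fun u v : Subtype p => T u v) ⟨a, ha⟩ ⟨b, hb⟩ ⟨c, hc⟩ := by
  obtain ⟨hab, hbc, hca, tab, tbc, tca⟩ := h
  exact ⟨by simpa using hab, by simpa using hbc, by simpa using hca, tab, tbc, tca⟩

theorem HasCycle.of_injective {S : W → W → Prop} {g : V → W} (hg : Function.Injective g)
    (hgS : ∀ a b, T a b → S (g a) (g b)) (hT : HasCycle T) : HasCycle S :=
  let ⟨k, f, hf, hfT⟩ := hT
  ⟨k, g ∘ f, hg.comp hf, fun i => hgS _ _ (hfT i)⟩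

open Fin.NatCast in
theorem HasCycle.exists_isCyclicTriple (htot : ∀ a b, a ≠ b → T a b ∨ T b a)
    (hT : HasCycle T) : ∃ a b c, IsCyclicTriple T a b c := by
  classical
  obtain ⟨k, f, hf, hfT⟩ := hT
  set g : ℕ → V := fun j => f (j : Fin (k + 3))
  have hg : ∀ j, T (g j) (g (j + 1)) := fun j => by simpa [g] using hfT (j : Fin (k + 3))
  have hg_ne : ∀ i j, i < k + 3 → j < k + 3 → i ≠ j → g i ≠ g j := by
    intro i j hi hj hij hgij
    have := congrArg Fin.val (hf hgij)
    simp only [Fin.val_natCast, Nat.mod_eq_of_lt hi, Nat.mod_eq_of_lt hj] at this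
    exact hij this
  have hlast : T (g (k + 2)) (g 0) := by simpa [g] using hg (k + 2)
  have hback : ∃ j, T (g (j + 2)) (g 0) := ⟨k, hlast⟩
  set j := Nat.find hback
  have hjk : j ≤ k := Nat.find_min' hback hlast
  have hto : T (g 0) (g (j + 1)) := by
    rcases Nat.eq_zero_or_pos j with hj0 | hj0
    · simpa [hj0] using hg 0
    · have hnot : ¬ T (g (j - 1 + 2)) (g 0) := Nat.find_min hback (by omega)
      rw [show j - 1 + 2 = j + 1 by omega] at hnot
      exact (htot _ _ (hg_ne 0 (j + 1) (by omega) (by omega) (by omega))).resolve_right hnot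
  exact ⟨g 0, g (j + 1), g (j + 2), hg_ne 0 (j + 1) (by omega) (by omega) (by omega),
    hg_ne (j + 1) (j + 2) (by omega) (by omega) (by omega),
    hg_ne (j + 2) 0 (by omega) (by omega) (by omega),
    hto, hg (j + 1), Nat.find_spec hback⟩

theorem IsCyclicTriple.replace_twin (hT : ∀ a b : V, a ≠ b → (T a b ↔ ¬ T b a)) {x y b c : V}
    (h : ∀ z : V, z ≠ x → z ≠ y → (T x z ↔ T y z)) (hy : IsCyclicTriple T y b c) :
    IsCyclicTriple T x b c := by
  obtain ⟨hyb, hbc, hcy, tyb, tbc, tcy⟩ := hy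
  have hyc : ¬ T y c := (hT c y hcy).1 tcy
  have hxb : x ≠ b := by
    rintro rfl
    exact hyc ((h c hbc.symm hcy).1 tbc)
  have hxc : x ≠ c := by
    rintro rfl
    exact (hT b x hbc).1 tbc ((h b hbc hyb.symm).2 tyb)
  have tcx : T c x := (hT c x hxc.symm).2 fun txc => hyc ((h c hxc.symm hcy).1 txc)
  exact ⟨hxb, hbc, hxc.symm, (h b hxb.symm hyb.symm).2 tyb, tbc, tcx⟩

end

theorem identify_twin_vertices_general {V : Type*}
    (T : V → V → Prop) (hT : ∀ a b : V, a ≠ b → (T a b ↔ ¬ T b a))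
    (x y : V) (hxy : x ≠ y)
    (h : ∀ z : V, z ≠ x → z ≠ y → (T x z ↔ T y z)) :
    HasCycle T ↔ HasCycle (fun a b : {v : V // v ≠ y} => T a.1 b.1) := by
  refine ⟨fun hC => ?_, HasCycle.of_injective Subtype.val_injective fun _ _ => id⟩
  have htot : ∀ a b, a ≠ b → T a b ∨ T b a := fun a b hab =>
    or_iff_not_imp_right.2 (hT a b hab).2
  have through_y : ∀ b c, IsCyclicTriple T y b c →
      HasCycle (fun a b : {v : V // v ≠ y} => T a.1 b.1) := fun b c hy =>
    ((hy.replace_twin hT h).subtype hxy hy.1.symm hy.2.2.1).hasCycle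
  obtain ⟨a, b, c, habc⟩ := hC.exists_isCyclicTriple htot
  by_cases ha : a = y
  · exact through_y b c (ha ▸ habc)
  by_cases hb : b = y
  · exact through_y c a (hb ▸ habc.rotate)
  by_cases hc : c = y
  · exact through_y a b (hc ▸ habc.rotate.rotate)
  exact (habc.subtype ha hb hc).hasCycle

/-- If `x ≠ y` are vertices of a tournament `T` on a finite vertex set such that every other
vertex `z` receives its edge with `x` in the same direction as its edge with `y` (the edge
goes from `x` to `z` iff it goes from `y` to `z`), then `T` has a directed cycle iff the
subtournament induced on `V \ {y}` has a directed cycle. -/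
theorem identify_twin_vertices {V : Type*} [Fintype V] [DecidableEq V]
    (T : V → V → Prop) (hT : ∀ a b : V, a ≠ b → (T a b ↔ ¬ T b a))
    (x y : V) (hxy : x ≠ y)
    (h : ∀ z : V, z ≠ x → z ≠ y → (T x z ↔ T y z)) :
    HasCycle T ↔ HasCycle (fun a b : {v : V // v ≠ y} => T a.1 b.1) :=
  identify_twin_vertices_general T hT x y hxy h
end

section
/- For every n ≥ 1, the power set of [n] = {1,…,n} can be partitioned into exactly binomial(n, ⌊n/2⌋) symmetric chains, where a symmetric chain is a sequence of subsets A_1 ⊂ A_2 ⊂ ⋯ ⊂ A_k with |A_{j+1}| = |A_j| + 1 for each j and |A_1| + |A_k| = n. -/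
/-!
Induction on the ground set (de Bruijn–Tengbergen–Kruyswijk). Given a symmetric chain
decomposition of the subsets of `S` and a new point `a`, each chain `A₁ ⊂ ⋯ ⊂ A_k` yields the two
chains `A₁ ⊂ ⋯ ⊂ A_k ⊂ A_k ∪ {a}` and `A₁ ∪ {a} ⊂ ⋯ ⊂ A_{k-1} ∪ {a}` (the second dropped when
empty), which are symmetric in `S ∪ {a}`; a set `A` lands in the offspring of the unique chain
through `A \ {a}`. Every symmetric chain meets the middle layer exactly once, so there are
`binomial(|S|, ⌊|S|/2⌋)` chains.
-/

/-- `L` is a symmetric chain in the power set of `[n]`: a nonempty sequence of subsets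
`A₁ ⊂ A₂ ⊂ ⋯ ⊂ A_k` with `|A_{j+1}| = |A_j| + 1` for each `j` and `|A₁| + |A_k| = n`. -/
def IsSymmetricChain (n : ℕ) (L : List (Finset (Fin n))) : Prop :=
  L ≠ [] ∧ L.Chain' (fun A B => A ⊆ B ∧ B.card = A.card + 1) ∧
    ∀ h : L ≠ [], (L.head h).card + (L.getLast h).card = n

namespace SymmetricChain

open Finset

variable {α : Type*}

def Step (A B : Finset α) : Prop := A ⊆ B ∧ #B = #A + 1

theorem map_card_eq_range' {A : Finset α} {l : List (Finset α)} (h : (A :: l).IsChain Step) :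
    (A :: l).map card = List.range' #A (l.length + 1) := by
  induction l generalizing A with
  | nil => rfl
  | cons B l ih =>
    obtain ⟨hAB, hl⟩ := List.isChain_cons_cons.mp h
    rw [List.map_cons, ih hl, hAB.2]
    rfl

/-- The last field says `|A₁| + |A_k| = |S|`, since the cardinalities along the chain are
consecutive (see `IsSymmChain.card_head_add_card_getLast`). -/
structure IsSymmChain (S : Finset α) (L : List (Finset α)) : Prop where
  ne_nil : L ≠ []
  chain : L.IsChain Step
  subset : ∀ A ∈ L, A ⊆ S
  two_mul_card_head_add_length : 2 * #(L.head ne_nil) + L.length = #S + 1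

namespace IsSymmChain

variable {S : Finset α} {L : List (Finset α)} {a : α}

theorem notMem_of_mem (hL : IsSymmChain S L) (ha : a ∉ S) {A : Finset α} (hA : A ∈ L) : a ∉ A :=
  fun h => ha (hL.subset A hA h)

theorem map_card (hL : IsSymmChain S L) :
    L.map card = List.range' #(L.head hL.ne_nil) L.length := by
  obtain ⟨A, l, rfl⟩ := List.exists_cons_of_ne_nil hL.ne_nil
  exact map_card_eq_range' hL.chain

theorem nodup (hL : IsSymmChain S L) : L.Nodup :=
  List.Nodup.of_map card (hL.map_card ▸ List.nodup_range')

theorem card_head_add_card_getLast (hL : IsSymmChain S L) :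
    #(L.head hL.ne_nil) + #(L.getLast hL.ne_nil) = #S := by
  have hlast := List.getLast_map (f := card) (l := L) (by simpa using hL.ne_nil)
  simp only [hL.map_card, List.getLast_range'] at hlast
  have := hL.two_mul_card_head_add_length
  have := List.length_pos_of_ne_nil hL.ne_nil
  omega

theorem existsUnique_card_eq_half (hL : IsSymmChain S L) : ∃! X, X ∈ L ∧ #X = #S / 2 := by
  have hmem : #S / 2 ∈ L.map card := by
    rw [hL.map_card, List.mem_range'_1]
    have := hL.two_mul_card_head_add_length
    have := List.length_pos_of_ne_nil hL.ne_nil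
    omega
  obtain ⟨X, hX, hXcard⟩ := List.mem_map.mp hmem
  exact ⟨X, ⟨hX, hXcard⟩, fun Y ⟨hY, hYcard⟩ =>
    List.inj_on_of_nodup_map (hL.map_card ▸ List.nodup_range') hY hX (hYcard.trans hXcard.symm)⟩

end IsSymmChain

structure IsSymmChainDecomposition (S : Finset α) (C : Finset (List (Finset α))) : Prop where
  isSymmChain : ∀ L ∈ C, IsSymmChain S L
  existsUnique_mem : ∀ A ⊆ S, ∃! L, L ∈ C ∧ A ∈ L

theorem IsSymmChainDecomposition.card_eq_choose {S : Finset α} {C : Finset (List (Finset α))}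
    (hC : IsSymmChainDecomposition S C) : #C = (#S).choose (#S / 2) := by
  rw [← card_powersetCard]
  choose mid hmid huniq using
    fun L (hL : L ∈ C) => (hC.isSymmChain L hL).existsUnique_card_eq_half
  have hmid_subset (L) (hL : L ∈ C) : mid L hL ⊆ S := (hC.isSymmChain L hL).subset _ (hmid L hL).1
  refine card_bij mid (fun L hL => mem_powersetCard.mpr ⟨hmid_subset L hL, (hmid L hL).2⟩) ?_ ?_
  · intro L₁ hL₁ L₂ hL₂ h
    exact (hC.existsUnique_mem _ (hmid_subset L₁ hL₁)).unique ⟨hL₁, (hmid L₁ hL₁).1⟩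
      ⟨hL₂, h ▸ (hmid L₂ hL₂).1⟩
  · intro X hX
    obtain ⟨hXS, hXcard⟩ := mem_powersetCard.mp hX
    obtain ⟨L, ⟨hL, hXL⟩, -⟩ := hC.existsUnique_mem X hXS
    exact ⟨L, hL, (huniq L hL X ⟨hXL, hXcard⟩).symm⟩

theorem isSymmChainDecomposition_empty :
    IsSymmChainDecomposition (∅ : Finset α) {[∅]} where
  isSymmChain L hL := by
    rw [mem_singleton.mp hL]
    exact ⟨List.cons_ne_nil _ _, List.isChain_singleton _, by simp, rfl⟩
  existsUnique_mem A hA := by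
    rw [subset_empty.mp hA]
    exact ⟨[∅], by simp, fun L hL => mem_singleton.mp hL.1⟩

variable [DecidableEq α]

theorem Step.insert {A B : Finset α} {a : α} (h : Step A B) (ha : a ∉ B) :
    Step (insert a A) (insert a B) :=
  ⟨insert_subset_insert a h.1, by
    rw [card_insert_of_notMem ha, card_insert_of_notMem (fun haA => ha (h.1 haA)), h.2]⟩

section Insert

variable (a : α) (L : List (Finset α))

def extend : List (Finset α) := L ++ [insert a (L.getLastD ∅)]

def shrink : List (Finset α) := L.dropLast.map (insert a)

def children : Finset (List (Finset α)) := ({extend a L, shrink a L} : Finset _).erase []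

theorem extend_mem_children : extend a L ∈ children a L := by
  simp [children, extend]

theorem shrink_mem_children (h : shrink a L ≠ []) : shrink a L ∈ children a L := by
  simp [children, h]

end Insert

theorem extend_eq (a : α) {L : List (Finset α)} (h : L ≠ []) :
    extend a L = L ++ [insert a (L.getLast h)] := by
  simp [extend, List.getLast?_eq_some_getLast h]

namespace IsSymmChain

variable {S : Finset α} {L : List (Finset α)} {a : α}

theorem extend (hL : IsSymmChain S L) (ha : a ∉ S) :
    IsSymmChain (insert a S) (SymmetricChain.extend a L) := by
  have hlast_mem := List.getLast_mem hL.ne_nil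
  rw [extend_eq a hL.ne_nil]
  refine ⟨by simp, ?_, ?_, ?_⟩
  · refine hL.chain.append (List.isChain_singleton _) ?_
    simp only [List.getLast?_eq_some_getLast hL.ne_nil, Option.mem_some_iff, List.head?_cons,
      forall_eq']
    exact ⟨subset_insert _ _, card_insert_of_notMem (hL.notMem_of_mem ha hlast_mem)⟩
  · intro A hA
    rcases List.mem_append.mp hA with hA | hA
    · exact (hL.subset A hA).trans (subset_insert a S)
    · rw [List.mem_singleton.mp hA]
      exact insert_subset_insert a (hL.subset _ hlast_mem)
  · simp only [List.head_append_of_ne_nil hL.ne_nil, List.length_append,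
      List.length_singleton, card_insert_of_notMem ha]
    have := hL.two_mul_card_head_add_length
    omega

theorem shrink (hL : IsSymmChain S L) (ha : a ∉ S) (hne : SymmetricChain.shrink a L ≠ []) :
    IsSymmChain (insert a S) (SymmetricChain.shrink a L) := by
  have hdrop : L.dropLast ≠ [] := fun h => hne (by simp [SymmetricChain.shrink, h])
  refine ⟨hne, ?_, ?_, ?_⟩
  · refine List.isChain_map _ |>.mpr ((List.IsChain.iff_mem.mp hL.chain).dropLast.imp ?_)
    rintro A B ⟨-, hB, hAB⟩
    exact hAB.insert (hL.notMem_of_mem ha hB)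
  · simp only [SymmetricChain.shrink, List.mem_map]
    rintro _ ⟨A, hA, rfl⟩
    exact insert_subset_insert a (hL.subset A (List.mem_of_mem_dropLast hA))
  · simp only [SymmetricChain.shrink, List.head_map, List.head_dropLast, List.length_map,
      List.length_dropLast, card_insert_of_notMem ha,
      card_insert_of_notMem (hL.notMem_of_mem ha (List.head_mem hL.ne_nil))]
    have := hL.two_mul_card_head_add_length
    have : 0 < L.length - 1 := by simpa using List.length_pos_of_ne_nil hdrop
    omega

theorem disjoint_extend_shrink (hL : IsSymmChain S L) (ha : a ∉ S) :
    (SymmetricChain.extend a L).Disjoint (SymmetricChain.shrink a L) := by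
  rw [extend_eq a hL.ne_nil]
  intro A hAe hAs
  obtain ⟨X, hX, rfl⟩ := List.mem_map.mp hAs
  rcases List.mem_append.mp hAe with hXL | hXlast
  · exact hL.notMem_of_mem ha hXL (mem_insert_self a X)
  · have hX_eq : X = L.getLast hL.ne_nil := by
      have := congrArg (·.erase a) (List.mem_singleton.mp hXlast)
      simpa only [erase_insert (hL.notMem_of_mem ha (List.mem_of_mem_dropLast hX)),
        erase_insert (hL.notMem_of_mem ha (List.getLast_mem hL.ne_nil))] using this
    have hnodup := hL.nodup
    rw [← List.dropLast_append_getLast hL.ne_nil] at hnodup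
    exact (List.nodup_append.mp hnodup).2.2 X hX _ (List.mem_singleton_self _) hX_eq

theorem of_mem_children (hL : IsSymmChain S L) (ha : a ∉ S) {M : List (Finset α)}
    (hM : M ∈ children a L) : IsSymmChain (insert a S) M := by
  simp only [children, mem_erase, mem_insert, mem_singleton] at hM
  obtain ⟨hne, rfl | rfl⟩ := hM
  · exact hL.extend ha
  · exact hL.shrink ha hne

theorem erase_mem_of_mem_children (hL : IsSymmChain S L) (ha : a ∉ S) {M : List (Finset α)}
    (hM : M ∈ children a L) {A : Finset α} (hA : A ∈ M) : A.erase a ∈ L := by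
  simp only [children, mem_erase, mem_insert, mem_singleton] at hM
  obtain ⟨-, rfl | rfl⟩ := hM
  · rw [extend_eq a hL.ne_nil, List.mem_append, List.mem_singleton] at hA
    rcases hA with hA | rfl
    · rwa [erase_eq_of_notMem (hL.notMem_of_mem ha hA)]
    · rw [erase_insert (hL.notMem_of_mem ha (List.getLast_mem _))]
      exact List.getLast_mem _
  · obtain ⟨X, hX, rfl⟩ := List.mem_map.mp hA
    have hXL := List.mem_of_mem_dropLast hX
    rwa [erase_insert (hL.notMem_of_mem ha hXL)]

theorem exists_mem_children_of_erase_mem (hL : IsSymmChain S L) {A : Finset α}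
    (hA : A.erase a ∈ L) : ∃ M ∈ children a L, A ∈ M := by
  by_cases haA : a ∈ A
  · rw [← insert_erase haA]
    by_cases hlast : A.erase a = L.getLast hL.ne_nil
    · refine ⟨_, extend_mem_children a L, ?_⟩
      simp [extend_eq a hL.ne_nil, hlast]
    · have hX := List.mem_map_of_mem (f := insert a)
        (List.mem_dropLast_of_mem_of_ne_getLast hA hlast)
      exact ⟨_, shrink_mem_children a L (List.ne_nil_of_mem hX), hX⟩
  · rw [erase_eq_of_notMem haA] at hA
    exact ⟨_, extend_mem_children a L, List.mem_append_left _ hA⟩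

theorem eq_of_mem_children (hL : IsSymmChain S L) (ha : a ∉ S) {M₁ M₂ : List (Finset α)}
    (hM₁ : M₁ ∈ children a L) (hM₂ : M₂ ∈ children a L) {A : Finset α} (hA₁ : A ∈ M₁)
    (hA₂ : A ∈ M₂) : M₁ = M₂ := by
  simp only [children, mem_erase, mem_insert, mem_singleton] at hM₁ hM₂
  rcases hM₁ with ⟨-, rfl | rfl⟩ <;> rcases hM₂ with ⟨-, rfl | rfl⟩
  · rfl
  · exact (hL.disjoint_extend_shrink ha hA₁ hA₂).elim
  · exact (hL.disjoint_extend_shrink ha hA₂ hA₁).elim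
  · rfl

end IsSymmChain

theorem IsSymmChainDecomposition.insert {S : Finset α} {C : Finset (List (Finset α))} {a : α}
    (hC : IsSymmChainDecomposition S C) (ha : a ∉ S) :
    IsSymmChainDecomposition (insert a S) (C.biUnion (children a)) where
  isSymmChain M hM := by
    obtain ⟨L, hL, hM⟩ := mem_biUnion.mp hM
    exact (hC.isSymmChain L hL).of_mem_children ha hM
  existsUnique_mem A hA := by
    obtain ⟨L, ⟨hL, hAL⟩, huniq⟩ := hC.existsUnique_mem _ (subset_insert_iff.mp hA)
    obtain ⟨M, hM, hAM⟩ := (hC.isSymmChain L hL).exists_mem_children_of_erase_mem hAL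
    refine ⟨M, ⟨mem_biUnion.mpr ⟨L, hL, hM⟩, hAM⟩, fun M' ⟨hM', hAM'⟩ => ?_⟩
    obtain ⟨L', hL', hM'⟩ := mem_biUnion.mp hM'
    obtain rfl := huniq L' ⟨hL', (hC.isSymmChain L' hL').erase_mem_of_mem_children ha hM' hAM'⟩
    exact (hC.isSymmChain L' hL').eq_of_mem_children ha hM' hM hAM' hAM

theorem exists_isSymmChainDecomposition (S : Finset α) : ∃ C, IsSymmChainDecomposition S C := by
  induction S using Finset.induction_on with
  | empty => exact ⟨_, isSymmChainDecomposition_empty⟩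
  | insert a S ha ih =>
    obtain ⟨C, hC⟩ := ih
    exact ⟨_, hC.insert ha⟩

theorem IsSymmChain.isSymmetricChain {n : ℕ} {L : List (Finset (Fin n))}
    (hL : IsSymmChain univ L) : IsSymmetricChain n L :=
  ⟨hL.ne_nil, hL.chain, fun _ => by simpa using hL.card_head_add_card_getLast⟩

end SymmetricChain

theorem symmetric_chain_decomposition_general (n : ℕ) :
    ∃ chains : Finset (List (Finset (Fin n))),
      chains.card = n.choose (n / 2) ∧
      (∀ L ∈ chains, IsSymmetricChain n L) ∧
      (∀ A : Finset (Fin n), ∃! L : List (Finset (Fin n)), L ∈ chains ∧ A ∈ L) := by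
  obtain ⟨C, hC⟩ := SymmetricChain.exists_isSymmChainDecomposition (Finset.univ : Finset (Fin n))
  exact ⟨C, by simpa using hC.card_eq_choose,
    fun L hL => (hC.isSymmChain L hL).isSymmetricChain,
    fun A => hC.existsUnique_mem A (Finset.subset_univ A)⟩

/-- For every `n ≥ 1`, the power set of `[n]` can be partitioned into exactly
`binomial(n, ⌊n/2⌋)` symmetric chains: every subset of `[n]` lies in exactly one chain. -/
theorem symmetric_chain_decomposition (n : ℕ) (hn : 1 ≤ n) :
    ∃ chains : Finset (List (Finset (Fin n))),
      chains.card = n.choose (n / 2) ∧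
      (∀ L ∈ chains, IsSymmetricChain n L) ∧
      (∀ A : Finset (Fin n), ∃! L : List (Finset (Fin n)), L ∈ chains ∧ A ∈ L) :=
  symmetric_chain_decomposition_general n
end
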